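/- arXiv:1309.5650 — 5 statements merged into one kernel-verified Lean document; each statement's English description precedes it below -/
import Mathlib

section
/- Let a < b be coprime positive integers, let 0 ≤ i < k < m ≤ b, and set t = b − m. Then the pair {im, km} is an edge of the obstruction graph OG(a,b) if and only if the translated pair {(i+t)b, (k+t)b} is an edge of OG(a,b). (In other words, the component of OG(a,b) consisting of edges with common larger endpoint m is obtained from the component with common larger endpoint b by translating all boundary points down by b − m.) -/
/-- `S(a,b) = { ⌊ib/a⌋ : i = 1, …, a-1 }`. -/
def Sab (a b : ℕ) : Finset ℕ := (Finset.Icc 1 (a - 1)).image (fun i => i * b / a)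

/-- A diagonal of the polygon `P_{b+1}` with boundary points `0, 1, …, b`:
a pair `i < j` with `j - i ≥ 2` and `(i, j) ≠ (0, b)`. -/
def IsDiagonal (b i j : ℕ) : Prop := i + 2 ≤ j ∧ j ≤ b ∧ ¬(i = 0 ∧ j = b)

/-- A diagonal `ij` is `a,b`-admissible if it separates `j - i - 1` and `b - j + i`
boundary points, both of which lie in `S(a,b)`. -/
def Admissible (a b : ℕ) (d : ℕ × ℕ) : Prop :=
  IsDiagonal b d.1 d.2 ∧ d.2 - d.1 - 1 ∈ Sab a b ∧ b - d.2 + d.1 ∈ Sab a b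

/-- Two diagonals `ij` and `km` cross if `i < k < j < m` or `k < i < m < j`. -/
def Crosses (d d' : ℕ × ℕ) : Prop :=
  (d.1 < d'.1 ∧ d'.1 < d.2 ∧ d.2 < d'.2) ∨ (d'.1 < d.1 ∧ d.1 < d'.2 ∧ d'.2 < d.2)

/-- An `a,b`-Dyck path: a north/east lattice path from `(0,0)` to `(b,a)` staying weakly
above `y = (a/b) x`.  It is encoded by the height `h u` of its unique east step over the
column interval `[u, u+1]`, for `0 ≤ u < b`; we normalize `h u = a` for `u ≥ b`. -/
structure DyckPath (a b : ℕ) where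
  h : ℕ → ℕ
  mono : Monotone h
  norm : ∀ x, b ≤ x → h x = a
  above : ∀ x, x < b → a * (x + 1) ≤ b * h x

/-- The lattice point `(x, y)` lies on `D` at the bottom of a north step of `D`. -/
def BottomNorth (a b : ℕ) (D : DyckPath a b) (x y : ℕ) : Prop :=
  x ≤ b ∧ (if x = 0 then 0 else D.h (x - 1)) ≤ y ∧ y < D.h x

/-- The laser of slope `a/b` fired northeast from the lattice point `(x, y)` of `D` first
hits `D` in the interior of the east step whose right endpoint has `x`-coordinate `k`;
the associated laser diagonal is `d(P) = (x, k)`.  The laser passes strictly below the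
right endpoint of every earlier east step and strictly above the one it hits. -/
def IsLaserDiag (a b : ℕ) (D : DyckPath a b) (x y k : ℕ) : Prop :=
  x < k ∧ k ≤ b ∧ b * D.h (k - 1) < b * y + a * (k - x) ∧
    ∀ u, x ≤ u → u + 1 < k → b * y + a * (u + 1 - x) < b * D.h u

/-- `F(D)`: the set of laser diagonals `d(P)` of the lattice points `P ≠ (0,0)` at the
bottoms of north steps of `D`. -/
def FD (a b : ℕ) (D : DyckPath a b) : Set (ℕ × ℕ) :=
  { d | ∃ y, BottomNorth a b D d.1 y ∧ (d.1, y) ≠ (0, 0) ∧ IsLaserDiag a b D d.1 y d.2 }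

/-- A finite abstract simplicial complex on the ground set `E`: a downward closed
collection of finite subsets of `E`. -/
structure AbsCplx (E : Type*) where
  faces : Set (Finset E)
  down : ∀ F ∈ faces, ∀ F' ⊆ F, F' ∈ faces

/-- The rational associahedron `Âss(a,b)`: faces are the sets of pairwise noncrossing
`a,b`-admissible diagonals. -/
def hatAss (a b : ℕ) : AbsCplx (ℕ × ℕ) where
  faces := { F | (∀ d ∈ F, Admissible a b d) ∧ ∀ d ∈ F, ∀ d' ∈ F, ¬Crosses d d' }
  down := fun F hF F' hsub =>
    ⟨fun d hd => hF.1 d (hsub hd), fun d hd d' hd' => hF.2 d (hsub hd) d' (hsub hd')⟩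

/-- The rational associahedron `Ass(a,b)`: faces are the subsets of the sets `F(D)`,
as `D` ranges over `a,b`-Dyck paths. -/
def Ass (a b : ℕ) : AbsCplx (ℕ × ℕ) where
  faces := { F | ∃ D : DyckPath a b, ∀ d ∈ F, d ∈ FD a b D }
  down := fun F hF F' hsub =>
    let ⟨D, hD⟩ := hF
    ⟨D, fun d hd => hD d (hsub hd)⟩

/-- Two distinct `a,b`-admissible diagonals `d, d'` form an edge of the obstruction graph
`OG(a,b)` exactly when `{d, d'}` is a face of `Âss(a,b)` but not of `Ass(a,b)`. -/
def OGEdge (a b : ℕ) (d d' : ℕ × ℕ) : Prop :=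
  d ≠ d' ∧ ({d, d'} : Finset (ℕ × ℕ)) ∈ (hatAss a b).faces ∧
    ({d, d'} : Finset (ℕ × ℕ)) ∉ (Ass a b).faces

/-!
Admissibility only depends on the numbers of boundary points cut off, and diagonals with a
common endpoint never cross, so the claim reduces to: `im` and `km` are laser diagonals of a
common Dyck path iff `(i+t)b` and `(k+t)b` are. Lasers are unchanged when the piece of path they
see is translated by a lattice vector. Given lasers from `(i, y₁)` and `(k, y₂)` hitting the east
step ending at `x = m`, move the path over `[i, m]` by `(t, a - h(m-1))`, so that this step ends at
`(b, a)`, and use the lowest Dyck path to the left of `x = i + t`; the translated lasers end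
above `(b, a)`, which keeps the new path above the diagonal. Conversely, move the path over
`[t, b]` by `(-t, -⌊at/b⌋)`; since `b ∤ at`, the path stays strictly above height `⌊at/b⌋` there,
so no laser start lands on `(0, 0)`.
-/

lemma monotone_ite_lt {f g : ℕ → ℕ} (hf : Monotone f) (hg : Monotone g) {c : ℕ}
    (hfg : ∀ u < c, f u ≤ g c) : Monotone fun u => if u < c then f u else g u := by
  intro u v huv
  dsimp only
  split_ifs with hu hv hv
  · exact hf huv
  · exact (hfg u hu).trans (hg (not_lt.1 hv))
  · omega
  · exact hg huv

/-- If the line of slope `a/b` through `(x, y)` passes above `(k, H)`, then every point `(w, z)`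
on or above it, translated by `(b - k, a - H)`, lies strictly above the line `y = (a/b) x`. -/
lemma mul_lt_of_above_laser {a b x y k w z H : ℕ} (hH : H ≤ a) (hk : k ≤ b) (hxw : x ≤ w)
    (hxk : x ≤ k) (hend : b * H < b * y + a * (k - x)) (hz : b * y + a * (w - x) ≤ b * z) :
    a * (w + (b - k)) < b * (z + (a - H)) := by
  zify [hH, hk, hxw, hxk] at *
  linear_combination hend + hz

namespace DyckPath

variable {a b : ℕ}

lemma div_le_h (D : DyckPath a b) {t u : ℕ} (htb : t ≤ b) (htu : t ≤ u + 1) :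
    a * t / b ≤ D.h u := by
  obtain rfl | ht := t.eq_zero_or_pos
  · simp
  calc a * t / b ≤ D.h (t - 1) :=
        Nat.div_le_of_le_mul (by simpa [Nat.sub_add_cancel ht] using D.above (t - 1) (by omega))
    _ ≤ D.h u := D.mono (by omega)

lemma h_le (D : DyckPath a b) (u : ℕ) : D.h u ≤ a :=
  (D.mono (le_max_left u b)).trans_eq (D.norm _ (le_max_right u b))

lemma div_lt_of_bottomNorth (D : DyckPath a b) (hcop : Nat.Coprime a b) {t x y : ℕ}
    (ht : 0 < t) (htb : t < b) (htx : t ≤ x) (hB : BottomNorth a b D x y) : a * t / b < y := by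
  have hle : a * t ≤ b * D.h (t - 1) := by
    simpa [Nat.sub_add_cancel ht] using D.above (t - 1) (by omega)
  have hne : a * t ≠ b * D.h (t - 1) := fun h =>
    absurd (Nat.le_of_dvd ht (hcop.symm.dvd_of_dvd_mul_left ⟨_, h⟩)) (by omega)
  have hprev := hB.2.1
  rw [if_neg (by omega)] at hprev
  calc a * t / b < D.h (t - 1) := by
        rw [Nat.div_lt_iff_lt_mul (by omega), mul_comm (D.h _)]
        exact lt_of_le_of_ne hle hne
    _ ≤ D.h (x - 1) := D.mono (by omega)
    _ ≤ y := hprev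

lemma exists_shift_left (D : DyckPath a b) {m : ℕ} (hmb : m ≤ b) :
    ∃ D' : DyckPath a b, ∀ u < m, D.h (u + (b - m)) = D'.h u + a * (b - m) / b := by
  set e := a * (b - m) / b
  have he : ∀ u, e ≤ D.h (u + (b - m)) := fun u => D.div_le_h (by omega) (by omega)
  refine ⟨⟨fun u => if u < m then D.h (u + (b - m)) - e else a,
    monotone_ite_lt (fun u v huv => Nat.sub_le_sub_right (D.mono (by omega)) e) monotone_const
      (fun u _ => (Nat.sub_le _ _).trans (D.h_le _)),
    fun x hx => if_neg (by omega), fun u hu => ?_⟩, fun u hu => ?_⟩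
  · split_ifs with hum
    · have hD := D.above (u + (b - m)) (by omega)
      have hbe : b * e ≤ a * (b - m) := Nat.mul_div_le _ _
      rw [show u + (b - m) + 1 = u + 1 + (b - m) by omega, mul_add] at hD
      rw [mul_tsub]
      omega
    · calc a * (u + 1) ≤ a * b := Nat.mul_le_mul_left _ (by omega)
        _ = b * a := mul_comm a b
  · dsimp only
    rw [if_pos hu]
    have := he u
    omega

lemma exists_shift_right (D : DyckPath a b) {i y m : ℕ} (hmb : m < b) (hy : y < D.h i)
    (hL : IsLaserDiag a b D i y m) :
    ∃ D' : DyckPath a b,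
      (∀ u, i ≤ u → u < m → D'.h (u + (b - m)) = D.h u + (a - D.h (m - 1))) ∧
        D'.h (i + (b - m) - 1) ≤ y + (a - D.h (m - 1)) := by
  obtain ⟨him, -, hend, hbelow⟩ := hL
  have hb : 0 < b := by omega
  set δ := a - D.h (m - 1)
  have habove : ∀ w z, i ≤ w → b * y + a * (w - i) ≤ b * z →
      a * (w + (b - m)) < b * (z + δ) :=
    fun w z hw hz => mul_lt_of_above_laser (D.h_le _) hmb.le hw him.le hend hz
  have hstart := habove i y le_rfl (by simp)
  refine ⟨⟨fun u => if u < i + (b - m) then a * (u + 1) ⌈/⌉ b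
      else D.h (min (u - (b - m)) (m - 1)) + δ,
    monotone_ite_lt (fun u v huv => (gc_mul_ceilDiv hb).monotone_l (by gcongr))
      (fun u v huv => Nat.add_le_add_right (D.mono (min_le_min_right _ (by omega))) _)
      (fun u hu => ?_), fun x hx => ?_, fun u hu => ?_⟩, fun u hiu hum => ?_, ?_⟩
  · rw [ceilDiv_le_iff_le_mul hb, Nat.add_sub_cancel, min_eq_left (Nat.le_sub_one_of_lt him)]
    have := habove i (D.h i) le_rfl (by simpa using Nat.mul_le_mul_left b hy.le)
    calc a * (u + 1) ≤ a * (i + (b - m)) := Nat.mul_le_mul_left _ (by omega)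
      _ ≤ b * (D.h i + δ) := this.le
  · rw [if_neg (by omega), min_eq_right (by omega), Nat.add_sub_cancel' (D.h_le _)]
  · split_ifs with hui
    · exact (ceilDiv_le_iff_le_mul hb).1 le_rfl
    obtain ⟨v, rfl⟩ : ∃ v, u = v + (b - m) := ⟨u - (b - m), by omega⟩
    rw [Nat.add_sub_cancel, min_eq_left (by omega)]
    obtain hv | hv := lt_or_eq_of_le (show v + 1 ≤ m by omega)
    · have := habove (v + 1) (D.h v) (by omega) (hbelow v (by omega) hv).le
      rw [show v + 1 + (b - m) = v + (b - m) + 1 by omega] at this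
      exact this.le
    · rw [show v = m - 1 by omega, Nat.add_sub_cancel' (D.h_le _),
        show m - 1 + (b - m) + 1 = b by omega, mul_comm]
  · dsimp only
    rw [if_neg (by omega), Nat.add_sub_cancel, min_eq_left (by omega)]
  · dsimp only
    rw [if_pos (by omega), ceilDiv_le_iff_le_mul hb,
      show i + (b - m) - 1 + 1 = i + (b - m) by omega]
    exact hstart.le

end DyckPath

section Shift

variable {a b : ℕ}

lemma isLaserDiag_iff_of_shift {D D' : DyckPath a b} {s e x y k : ℕ}
    (hshift : ∀ u, x ≤ u → u < k → D'.h (u + s) = D.h u + e) (hxk : x < k)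
    (hk : k + s ≤ b) :
    IsLaserDiag a b D x y k ↔ IsLaserDiag a b D' (x + s) (y + e) (k + s) := by
  have hend : D'.h (k + s - 1) = D.h (k - 1) + e := by
    rw [show k + s - 1 = k - 1 + s by omega]; exact hshift _ (by omega) (by omega)
  unfold IsLaserDiag
  rw [hend, show k + s - (x + s) = k - x by omega]
  simp only [mul_add]
  constructor
  · rintro ⟨-, -, hlt, hbelow⟩
    refine ⟨by omega, hk, by omega, fun u hxu huk => ?_⟩
    obtain ⟨v, rfl⟩ : ∃ v, u = v + s := ⟨u - s, by omega⟩
    rw [hshift v (by omega) (by omega), show v + s + 1 - (x + s) = v + 1 - x by omega, mul_add]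
    have := hbelow v (by omega) (by omega)
    omega
  · rintro ⟨-, -, hlt, hbelow⟩
    refine ⟨hxk, by omega, by omega, fun u hxu huk => ?_⟩
    have := hbelow (u + s) (by omega) (by omega)
    rw [hshift u hxu (by omega), show u + s + 1 - (x + s) = u + 1 - x by omega, mul_add] at this
    omega

lemma mem_FD_translate_of_shift {D D' : DyckPath a b} {x y m e : ℕ} (hmb : m < b)
    (hshift : ∀ u, x ≤ u → u < m → D'.h (u + (b - m)) = D.h u + e)
    (hprev : D'.h (x + (b - m) - 1) ≤ y + e)
    (hB : BottomNorth a b D x y) (hL : IsLaserDiag a b D x y m) :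
    (x + (b - m), b) ∈ FD a b D' := by
  have hxm : x < m := hL.1
  refine ⟨y + e, ⟨by omega, ?_, ?_⟩, by simp only [ne_eq, Prod.mk.injEq]; omega, ?_⟩
  · rwa [if_neg (by omega)]
  · rw [hshift x le_rfl hxm]
    exact Nat.add_lt_add_right hB.2.2 e
  · have := (isLaserDiag_iff_of_shift hshift hxm (by omega)).1 hL
    rwa [Nat.add_sub_cancel' hmb.le] at this

lemma mem_FD_of_translate_of_shift {D D' : DyckPath a b} {x y m e : ℕ} (hmb : m ≤ b)
    (hshift : ∀ u < m, D.h (u + (b - m)) = D'.h u + e) (hey : e < y)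
    (hB : BottomNorth a b D (x + (b - m)) y) (hL : IsLaserDiag a b D (x + (b - m)) y b) :
    (x, m) ∈ FD a b D' := by
  have hxm : x < m := by have := hL.1; omega
  refine ⟨y - e, ⟨by omega, ?_, ?_⟩, by simp only [ne_eq, Prod.mk.injEq]; omega, ?_⟩
  · dsimp only
    split_ifs with hx
    · exact Nat.zero_le _
    · have := hB.2.1
      rw [if_neg (by omega), show x + (b - m) - 1 = x - 1 + (b - m) by omega,
        hshift _ (by omega)] at this
      omega
  · have := hB.2.2
    rw [hshift x hxm] at this
    dsimp only
    omega
  · have := (isLaserDiag_iff_of_shift (y := y - e) (fun u _ hu => hshift u hu) hxm (by omega)).2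
    rw [Nat.sub_add_cancel hey.le, Nat.add_sub_cancel' hmb] at this
    exact this hL

end Shift

lemma exists_mem_FD_pair_translate_iff {a b i k m : ℕ} (hcop : Nat.Coprime a b) (hik : i < k)
    (hmb : m < b) :
    (∃ D : DyckPath a b, (i, m) ∈ FD a b D ∧ (k, m) ∈ FD a b D) ↔
      ∃ D : DyckPath a b, (i + (b - m), b) ∈ FD a b D ∧ (k + (b - m), b) ∈ FD a b D := by
  constructor
  · rintro ⟨D, ⟨y₁, hB₁, -, hL₁⟩, ⟨y₂, hB₂, -, hL₂⟩⟩
    dsimp only at hB₁ hL₁ hB₂ hL₂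
    obtain ⟨D', hshift, hprev⟩ := D.exists_shift_right hmb hB₁.2.2 hL₁
    refine ⟨D', mem_FD_translate_of_shift hmb hshift hprev hB₁ hL₁,
      mem_FD_translate_of_shift hmb (fun u hu => hshift u (hik.le.trans hu)) ?_ hB₂ hL₂⟩
    have hkm := hL₂.1
    have hprev₂ := hB₂.2.1
    rw [if_neg (by omega)] at hprev₂
    rw [show k + (b - m) - 1 = k - 1 + (b - m) by omega, hshift _ (by omega) (by omega)]
    omega
  · rintro ⟨D, ⟨y₁, hB₁, -, hL₁⟩, ⟨y₂, hB₂, -, hL₂⟩⟩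
    dsimp only at hB₁ hL₁ hB₂ hL₂
    have hm : 0 < m := by have := hL₁.1; omega
    obtain ⟨D', hshift⟩ := D.exists_shift_left hmb.le
    have hlt {x y : ℕ} (hB : BottomNorth a b D (x + (b - m)) y) : a * (b - m) / b < y :=
      D.div_lt_of_bottomNorth hcop (by omega) (by omega) (by omega) hB
    exact ⟨D', mem_FD_of_translate_of_shift hmb.le hshift (hlt hB₁) hB₁ hL₁,
      mem_FD_of_translate_of_shift hmb.le hshift (hlt hB₂) hB₂ hL₂⟩

lemma not_crosses_same_snd (x x' m : ℕ) : ¬Crosses (x, m) (x', m) := by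
  unfold Crosses
  omega

lemma OGEdge_same_endpoint_iff {a b x x' m : ℕ} :
    OGEdge a b (x, m) (x', m) ↔
      x ≠ x' ∧ (Admissible a b (x, m) ∧ Admissible a b (x', m)) ∧
        ¬∃ D : DyckPath a b, (x, m) ∈ FD a b D ∧ (x', m) ∈ FD a b D := by
  simp only [OGEdge, hatAss, Ass, Set.mem_ofPred_eq, Finset.mem_insert, Finset.mem_singleton,
    forall_eq_or_imp, forall_eq, not_crosses_same_snd, not_false_eq_true, and_true, ne_eq,
    Prod.mk.injEq]

lemma admissible_translate_iff {a b x m : ℕ} (hmb : m ≤ b) :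
    Admissible a b (x, m) ↔ Admissible a b (x + (b - m), b) := by
  unfold Admissible IsDiagonal
  rw [show m - x - 1 = b - (x + (b - m)) - 1 by omega,
    show b - m + x = b - b + (x + (b - m)) by omega]
  exact and_congr_left' (by omega)

theorem OGEdge_translation_general (a b i k m : ℕ)
    (hcop : Nat.Coprime a b) (hik : i < k) (hmb : m ≤ b) :
    OGEdge a b (i, m) (k, m) ↔ OGEdge a b (i + (b - m), b) (k + (b - m), b) := by
  obtain rfl | hmb := hmb.eq_or_lt
  · simp
  rw [OGEdge_same_endpoint_iff, OGEdge_same_endpoint_iff, admissible_translate_iff hmb.le,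
    admissible_translate_iff (x := k) hmb.le, exists_mem_FD_pair_translate_iff hcop hik hmb]
  simp [hik.ne]

/-- For `0 ≤ i < k < m ≤ b` and `t = b - m`, the pair `{im, km}` is an edge of
`OG(a,b)` if and only if the translated pair `{(i+t)b, (k+t)b}` is an edge of
`OG(a,b)`. -/
theorem OGEdge_translation (a b i k m : ℕ) (ha : 0 < a) (hab : a < b)
    (hcop : Nat.Coprime a b) (hik : i < k) (hkm : k < m) (hmb : m ≤ b) :
    OGEdge a b (i, m) (k, m) ↔ OGEdge a b (i + (b - m), b) (k + (b - m), b) :=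
  OGEdge_translation_general a b i k m hcop hik hmb
end

section
/- Let a < b be coprime positive integers and let im and km be a,b-admissible diagonals of P_{b+1} with i < k < m such that {im, km} is an edge of the obstruction graph OG(a,b). Then ik is an a,b-admissible diagonal of P_{b+1}. -/
/-!
Write `m - i - 1 = ⌊ci b / a⌋` and `m - k - 1 = ⌊ck b / a⌋`. By coprimality
`a (m - i - 1) < ci b < a (m - i)`, which says that the laser of slope `a/b` fired from
`(i, a - ci)` crosses the height `a` inside the column `[m - 1, m]`; likewise from `(k, a - ck)`.
If `a (k - i) < (ci - ck) b`, the first laser passes strictly above `(k, a - ck)`, so the lowest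
Dyck path lying above both lasers and reaching height `a` at column `m - 1` has north steps at both
points and realizes both `im` and `km`: the pair is a face of `Ass(a,b)`. Equality is excluded by
coprimality, and otherwise `ci - ck` witnesses `k - i - 1 ∈ S(a,b)`, while `S(a,b)` is invariant
under `t ↦ b - 1 - t`.
-/

section Sab

variable {a b : ℕ}

theorem Nat.Coprime.mul_ne_mul (hcop : a.Coprime b) {c : ℕ} (hc : 0 < c) (hca : c < a) (t : ℕ) :
    c * b ≠ a * t := fun h =>
  absurd (Nat.le_of_dvd hc (hcop.dvd_of_dvd_mul_right ⟨t, h⟩)) (not_le.2 hca)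

theorem mem_Sab_iff (hcop : a.Coprime b) {t : ℕ} :
    t ∈ Sab a b ↔ ∃ c, 0 < c ∧ c < a ∧ a * t < c * b ∧ c * b < a * (t + 1) := by
  simp only [Sab, Finset.mem_image, Finset.mem_Icc]
  constructor
  · rintro ⟨c, ⟨hc, hc_le⟩, rfl⟩
    have hca : c < a := by omega
    refine ⟨c, hc, hca, lt_of_le_of_ne ?_ (hcop.mul_ne_mul hc hca _).symm, ?_⟩
    · rw [mul_comm]; exact Nat.div_mul_le_self _ _
    · exact Nat.lt_mul_div_succ _ (by omega)
  · rintro ⟨c, hc, hca, hlo, hhi⟩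
    exact ⟨c, ⟨hc, by omega⟩, Nat.div_eq_of_lt_le (by linarith) (by linarith)⟩

theorem pos_of_mem_Sab (hcop : a.Coprime b) (hab : a < b) {t : ℕ} (ht : t ∈ Sab a b) : 0 < t := by
  obtain ⟨c, hc, -, -, hhi⟩ := (mem_Sab_iff hcop).1 ht
  by_contra! h0
  obtain rfl : t = 0 := by omega
  nlinarith

theorem sub_mem_Sab (hcop : a.Coprime b) {t : ℕ} (ht : t ∈ Sab a b) : b - 1 - t ∈ Sab a b := by
  obtain ⟨c, hc, hca, hlo, hhi⟩ := (mem_Sab_iff hcop).1 ht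
  have htb : t + 1 ≤ b := by nlinarith
  obtain ⟨s, rfl⟩ : ∃ s, b = t + 1 + s := ⟨b - (t + 1), by omega⟩
  rw [show t + 1 + s - 1 - t = s by omega]
  refine (mem_Sab_iff hcop).2 ⟨a - c, by omega, by omega, ?_, ?_⟩ <;>
  · zify [hca.le] at hlo hhi ⊢
    linarith

end Sab

theorem Nat.lt_of_mul_lt_mul_of_le {a b c n : ℕ} (h : c * b < a * n) (hn : n ≤ b) : c < a :=
  Nat.lt_of_mul_lt_mul_right (h.trans_le (Nat.mul_le_mul_left a hn))

section Laser

variable {a b p y : ℕ}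

/-- The least height of a lattice point on the line `x = u + 1` strictly above the laser of
slope `a/b` fired from `(p, y)`, and `0` left of `p`. -/
def laserBound (a b p y u : ℕ) : ℕ := if p ≤ u then y + a * (u + 1 - p) / b + 1 else 0

theorem laserBound_mono : Monotone (laserBound a b p y) := by
  intro u v huv
  unfold laserBound
  split_ifs with hu hv hv
  · gcongr
  · omega
  · exact Nat.zero_le _
  · exact le_rfl

theorem lt_mul_laserBound (hb : 0 < b) {u : ℕ} (hpu : p ≤ u) :
    b * y + a * (u + 1 - p) < b * laserBound a b p y u := by
  rw [laserBound, if_pos hpu]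
  have := Nat.lt_mul_div_succ (a * (u + 1 - p)) hb
  linarith

theorem laserBound_le {m u : ℕ} (hum : u + 1 < m) (h : a * (m - p - 1) < b * (a - y)) :
    laserBound a b p y u ≤ a := by
  unfold laserBound
  split_ifs with hpu
  · have : a * (u + 1 - p) / b < a - y :=
      Nat.div_lt_of_lt_mul ((Nat.mul_le_mul_left a (by omega)).trans_lt h)
    lia
  · exact Nat.zero_le a

theorem mem_FD_of_laserBound_le (D : DyckPath a b) {m : ℕ} (hbot : BottomNorth a b D p y)
    (hne : (p, y) ≠ (0, 0)) (hpm : p < m) (hmb : m ≤ b)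
    (hend : b * D.h (m - 1) < b * y + a * (m - p))
    (hlow : ∀ u, p ≤ u → u + 1 < m → laserBound a b p y u ≤ D.h u) : (p, m) ∈ FD a b D :=
  ⟨y, hbot, hne, hpm, hmb, hend, fun u hpu hum =>
    (lt_mul_laserBound (by omega) hpu).trans_le (Nat.mul_le_mul_left b (hlow u hpu hum))⟩

end Laser

section CappedPath

variable {a b m : ℕ} {g : ℕ → ℕ}

def cappedHeight (a b m : ℕ) (g : ℕ → ℕ) (u : ℕ) : ℕ :=
  if u + 1 < m then max (a * (u + 1) ⌈/⌉ b) (g u) else a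

theorem cappedHeight_le (hmb : m ≤ b) (hga : ∀ u, u + 1 < m → g u ≤ a) (u : ℕ) :
    cappedHeight a b m g u ≤ a := by
  unfold cappedHeight
  split_ifs with hum
  · refine max_le ((ceilDiv_le_iff_le_mul (by omega)).2 ?_) (hga u hum)
    rw [mul_comm b]
    exact Nat.mul_le_mul_left a (by omega)
  · exact le_rfl

theorem cappedHeight_mono (hmb : m ≤ b) (hg : Monotone g) (hga : ∀ u, u + 1 < m → g u ≤ a) :
    Monotone (cappedHeight a b m g) := by
  intro u v huv
  by_cases hvm : v + 1 < m
  · have hum : u + 1 < m := by omega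
    simp only [cappedHeight, if_pos hum, if_pos hvm]
    exact max_le_max ((gc_mul_ceilDiv (by omega)).monotone_l (by gcongr)) (hg huv)
  · simpa only [cappedHeight, if_neg hvm] using cappedHeight_le hmb hga u

def cappedPath (hmb : m ≤ b) (hg : Monotone g) (hga : ∀ u, u + 1 < m → g u ≤ a) :
    DyckPath a b where
  h := cappedHeight a b m g
  mono := cappedHeight_mono hmb hg hga
  norm x hx := if_neg (by omega)
  above x hx := by
    unfold cappedHeight
    split_ifs with hxm
    · have hb : 0 < b := by omega
      exact (le_smul_ceilDiv hb).trans (Nat.mul_le_mul_left b (le_max_left _ _))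
    · rw [mul_comm b]
      exact Nat.mul_le_mul_left a hx

end CappedPath

section Wedge

variable {a b m : ℕ}

theorem mem_FD_cappedPath {g : ℕ → ℕ} (hmb : m ≤ b) (hg : Monotone g)
    (hga : ∀ u, u + 1 < m → g u ≤ a) {p c : ℕ} (hpm : p + 1 < m)
    (hhi : c * b < a * (m - p)) (hbelow : p ≠ 0 → g (p - 1) ≤ a - c)
    (habove : ∀ u, p ≤ u → u + 1 < m → laserBound a b p (a - c) u ≤ g u) :
    (p, m) ∈ FD a b (cappedPath hmb hg hga) := by
  have hb : 0 < b := by omega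
  have hca : c < a := Nat.lt_of_mul_lt_mul_of_le hhi (by omega)
  have hp_above : a * p ≤ b * (a - c) := by
    have : a * (m - p) ≤ a * (b - p) := by gcongr
    zify [hca.le, (by omega : p ≤ b)] at hhi this ⊢
    linarith
  have hlow : ∀ u, p ≤ u → u + 1 < m → laserBound a b p (a - c) u ≤ cappedHeight a b m g u :=
    fun u hpu hum => by
      simpa only [cappedHeight, if_pos hum] using le_max_of_le_right (habove u hpu hum)
  refine mem_FD_of_laserBound_le _ ⟨by omega, ?_, ?_⟩ (by simp; omega) (by omega) hmb ?_ hlow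
  · show (if p = 0 then 0 else cappedHeight a b m g (p - 1)) ≤ a - c
    split_ifs with hp0
    · exact Nat.zero_le _
    · rw [cappedHeight, if_pos (by omega), Nat.sub_add_cancel (by omega)]
      exact max_le ((ceilDiv_le_iff_le_mul hb).2 hp_above) (hbelow hp0)
  · have := hlow p le_rfl hpm
    rw [laserBound, if_pos le_rfl] at this
    exact lt_of_lt_of_le (by lia) this
  · show b * cappedHeight a b m g (m - 1) < b * (a - c) + a * (m - p)
    rw [cappedHeight, if_neg (by omega)]
    zify [hca.le] at hhi ⊢
    linarith

theorem wedge_mem_Ass_faces {i k ci ck : ℕ} (hik : i < k) (hkm : k + 1 < m) (hmb : m ≤ b)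
    (hi : a * (m - i - 1) < ci * b) (hi' : ci * b < a * (m - i))
    (hk : a * (m - k - 1) < ck * b) (hk' : ck * b < a * (m - k))
    (hwedge : a * (k - i) < (ci - ck) * b) :
    ({(i, m), (k, m)} : Finset (ℕ × ℕ)) ∈ (Ass a b).faces := by
  have hci : ci < a := Nat.lt_of_mul_lt_mul_of_le hi' (by omega)
  have hck : ck < a := Nat.lt_of_mul_lt_mul_of_le hk' (by omega)
  set g := fun u => max (laserBound a b i (a - ci) u) (laserBound a b k (a - ck) u)
  have hg : Monotone g := laserBound_mono.max laserBound_mono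
  have hga : ∀ u, u + 1 < m → g u ≤ a := fun u hum =>
    max_le (laserBound_le hum (by rwa [Nat.sub_sub_self hci.le, mul_comm b]))
      (laserBound_le hum (by rwa [Nat.sub_sub_self hck.le, mul_comm b]))
  have hmi := mem_FD_cappedPath hmb hg hga (by omega) hi'
    (fun _ => by simp only [g, laserBound, if_neg (by omega : ¬i ≤ i - 1),
      if_neg (by omega : ¬k ≤ i - 1), max_self, Nat.zero_le]) (fun u _ _ => le_max_left _ _)
  have hmk := mem_FD_cappedPath hmb hg hga hkm hk'
    (fun _ => by
      have : a * (k - i) / b < ci - ck := Nat.div_lt_of_lt_mul (by rwa [mul_comm b])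
      simp only [g, laserBound, if_pos (by omega : i ≤ k - 1), if_neg (by omega : ¬k ≤ k - 1)]
      rw [Nat.sub_add_cancel (by omega : 1 ≤ k)]
      lia)
    (fun u _ _ => le_max_right _ _)
  refine ⟨cappedPath hmb hg hga, fun d hd => ?_⟩
  rcases Finset.mem_insert.1 hd with rfl | hd
  · exact hmi
  · rw [Finset.mem_singleton.1 hd]
    exact hmk

theorem admissible_of_wedge (hcop : a.Coprime b) (hab : a < b) {i k ci ck : ℕ} (hik : i < k)
    (hkm : k < m) (hmb : m ≤ b) (hi : a * (m - i - 1) < ci * b) (hi' : ci * b < a * (m - i))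
    (hk' : ck * b < a * (m - k)) (hwedge : (ci - ck) * b < a * (k - i)) :
    Admissible a b (i, k) := by
  have hca : ci < a := Nat.lt_of_mul_lt_mul_of_le hi' (by omega)
  have hck : ck < ci := by
    have : a * (m - k) ≤ a * (m - i - 1) := Nat.mul_le_mul_left a (by omega)
    exact Nat.lt_of_mul_lt_mul_right (hk'.trans (this.trans_lt hi))
  have hS : k - i - 1 ∈ Sab a b := by
    refine (mem_Sab_iff hcop).2 ⟨ci - ck, by omega, by omega, ?_, ?_⟩
    · zify [hck.le, (by omega : k ≤ m), (by omega : i ≤ m), (by omega : 1 ≤ m - i),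
        (by omega : i ≤ k), (by omega : 1 ≤ k - i)] at hi hk' ⊢
      linarith
    · rwa [Nat.sub_add_cancel (by omega)]
  have hpos := pos_of_mem_Sab hcop hab hS
  refine ⟨⟨by omega, by omega, by omega⟩, hS, ?_⟩
  simpa only [show b - 1 - (k - i - 1) = b - k + i by omega] using sub_mem_Sab hcop hS

end Wedge

theorem OGEdge_completing_wedge_general (a b i k m : ℕ) (hab : a < b)
    (hcop : Nat.Coprime a b) (hik : i < k) (hkm : k < m)
    (h1 : Admissible a b (i, m)) (h2 : Admissible a b (k, m))
    (he : OGEdge a b (i, m) (k, m)) : Admissible a b (i, k) := by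
  have hmb : m ≤ b := h1.1.2.1
  have hkm2 : k + 2 ≤ m := h2.1.1
  obtain ⟨ci, -, -, hi, hi'⟩ := (mem_Sab_iff hcop).1 (h1.2.1 : m - i - 1 ∈ Sab a b)
  obtain ⟨ck, -, -, hk, hk'⟩ := (mem_Sab_iff hcop).1 (h2.2.1 : m - k - 1 ∈ Sab a b)
  rw [show m - i - 1 + 1 = m - i by omega] at hi'
  rw [show m - k - 1 + 1 = m - k by omega] at hk'
  rcases lt_trichotomy ((ci - ck) * b) (a * (k - i)) with hlt | heq | hgt
  · exact admissible_of_wedge hcop hab hik hkm hmb hi hi' hk' hlt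
  · rw [mul_comm, mul_comm a] at heq
    exact absurd heq (hcop.symm.mul_ne_mul (by omega) (by omega) _).symm
  · exact absurd (wedge_mem_Ass_faces hik (by omega) hmb hi hi' hk hk' hgt) he.2.2

/-- If the `a,b`-admissible diagonals `im` and `km` with `i < k < m` form an edge of
`OG(a,b)`, then `ik` is an `a,b`-admissible diagonal. -/
theorem OGEdge_completing_wedge (a b i k m : ℕ) (ha : 0 < a) (hab : a < b)
    (hcop : Nat.Coprime a b) (hik : i < k) (hkm : k < m)
    (h1 : Admissible a b (i, m)) (h2 : Admissible a b (k, m))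
    (he : OGEdge a b (i, m) (k, m)) : Admissible a b (i, k) :=
  OGEdge_completing_wedge_general a b i k m hab hcop hik hkm h1 h2 he
end

section
/- Let a < b be coprime positive integers. Suppose im and jm are a,b-admissible diagonals of P_{b+1} with i < j < m such that {im, jm} is an edge of the obstruction graph OG(a,b). Suppose further that i < k < j, that km is an a,b-admissible diagonal, and that {km, jm} is NOT an edge of OG(a,b). Then {im, km} is an edge of OG(a,b) and ik is an a,b-admissible diagonal of P_{b+1}. -/
section OGAux

lemma OG_bdiv {b : ℕ} (hb : 0 < b) (v : ℕ) : b * (v / b) ≤ v ∧ v < b * (v / b) + b := by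
  have h1 := Nat.div_add_mod v b
  have h2 := Nat.mod_lt v hb
  omega

lemma OG_div_le_of_lt_mul {b v w : ℕ} (hb : 0 < b) (h : v < b * (w+1)) : v / b ≤ w := by
  have h' : v < (w+1) * b := by rw [Nat.mul_comm]; exact h
  exact Nat.lt_succ_iff.mp ((Nat.div_lt_iff_lt_mul hb).2 h')

lemma OG_div_succ_le {b v H : ℕ} (hb : 0 < b) (h : v < b * H) : v / b + 1 ≤ H := by
  have h' : v < H * b := by rw [Nat.mul_comm]; exact h
  have := (Nat.div_lt_iff_lt_mul hb).2 h'
  omega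

lemma OG_le_div_of_mul_le {b v w : ℕ} (hb : 0 < b) (h : b * w ≤ v) : w ≤ v / b := by
  rw [Nat.le_div_iff_mul_le hb]
  rw [Nat.mul_comm] at h; exact h

lemma OG_sub_mul_mod {b H S : ℕ} (hb : 0 < b) (h1 : b * H < S) (h2 : S < b * H + b) :
    S % b = S - b * H := by
  have hlt : S - b * H < b := by omega
  conv_lhs => rw [show S = b * H + (S - b * H) by omega]
  rw [Nat.mul_add_mod, Nat.mod_eq_of_lt hlt]

lemma OG_crit_of_adm {a b d : ℕ} (ha : 0 < a) (hab : a < b) (hd1 : 1 ≤ d) (hdb : d < b)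
    (h1 : d - 1 ∈ Sab a b) (h2 : b - d ∈ Sab a b) :
    1 ≤ a * d % b ∧ a * d % b ≤ a - 1 := by
  simp only [Sab, Finset.mem_image, Finset.mem_Icc] at h1 h2
  obtain ⟨i, ⟨hi1, hi2⟩, hieq⟩ := h1
  obtain ⟨i', ⟨hi'1, hi'2⟩, hi'eq⟩ := h2
  have l1 : (d-1) * a ≤ i * b := hieq ▸ Nat.div_mul_le_self (i*b) a
  have u1 : i * b < d * a := (Nat.div_lt_iff_lt_mul ha).1 (by rw [hieq]; omega)
  have l2 : (b-d) * a ≤ i' * b := hi'eq ▸ Nat.div_mul_le_self (i'*b) a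
  have u2 : i' * b < (b - d + 1) * a := (Nat.div_lt_iff_lt_mul ha).1 (by rw [hi'eq]; omega)
  set j := a - i' with hj
  have e1 : (d-1)*a + a = d*a := by
    have h : d - 1 + 1 = d := by omega
    calc (d-1)*a + a = (d-1+1)*a := by ring
    _ = d*a := by rw [h]
  have e2 : (b-d)*a + d*a = b*a := by
    have h : b - d + d = b := by omega
    calc (b-d)*a + d*a = (b-d+d)*a := by ring
    _ = b*a := by rw [h]
  have e2' : (b-d+1)*a = (b-d)*a + a := by ring
  have e3 : j*b + i'*b = a*b := by
    have h : j + i' = a := by omega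
    calc j*b + i'*b = (j+i')*b := by ring
    _ = a*b := by rw [h]
  have cab : a*b = b*a := Nat.mul_comm a b
  have hij1 : i * b < (j+1) * b := by
    have : (j+1)*b = j*b + b := by ring
    omega
  have hij2 : j * b < (i+1) * b := by
    have : (i+1)*b = i*b + b := by ring
    omega
  have hij : i = j := by
    have a1 := lt_of_mul_lt_mul_right hij1 (Nat.zero_le b)
    have a2 := lt_of_mul_lt_mul_right hij2 (Nat.zero_le b)
    omega
  have hda : d * a = a * d := Nat.mul_comm d a
  have hib : i * b = b * i := Nat.mul_comm i b
  have hr : a * d % b = a * d - b * i := by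
    rw [show a*d = b*i + (a*d - b*i) by omega, Nat.mul_add_mod,
      Nat.mod_eq_of_lt (by omega)]
    omega
  have hjb : j * b = b * i := by rw [← hij, hib]
  omega

lemma OG_adm_of_crit {a b d : ℕ} (ha : 0 < a) (hab : a < b) (hd1 : 1 ≤ d) (hdb : d < b)
    (h1 : 1 ≤ a * d % b) (h2 : a * d % b ≤ a - 1) :
    2 ≤ d ∧ d - 1 ∈ Sab a b ∧ b - d ∈ Sab a b := by
  set e := a * d % b with he
  set q := a * d / b with hq
  have hdm : b * q + e = a * d := Nat.div_add_mod (a*d) b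
  have hq1 : 1 ≤ q := by
    rcases Nat.eq_zero_or_pos q with h | h
    · have had : a ≤ a * d := Nat.le_mul_of_pos_right a (by omega)
      rw [h, Nat.mul_zero] at hdm
      omega
    · exact h
  have hqa : q < a := by
    have h3 : a * d ≤ a * (b-1) := Nat.mul_le_mul_left a (by omega)
    have h4 : a * (b-1) + a = a * b := by
      calc a*(b-1) + a = a*((b-1)+1) := by ring
      _ = a * b := by congr 1; omega
    have cab : a * b = b * a := Nat.mul_comm a b
    have h5 : b * q < b * a := by omega
    exact lt_of_mul_lt_mul_left h5 (Nat.zero_le b)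
  have hd2 : 2 ≤ d := by
    rcases Nat.lt_or_ge d 2 with h | h
    · have hd' : d = 1 := by omega
      subst hd'
      have hbq : b ≤ b * q := Nat.le_mul_of_pos_right b hq1
      have ha1 : a * 1 = a := Nat.mul_one a
      omega
    · exact h
  refine ⟨hd2, ?_, ?_⟩
  · simp only [Sab, Finset.mem_image, Finset.mem_Icc]
    refine ⟨q, ⟨hq1, by omega⟩, ?_⟩
    have hda : a * (d-1) + a = a * d := by
      calc a*(d-1)+a = a*((d-1)+1) := by ring
      _ = a*d := by congr 1; omega
    have key : q * b = a * (d-1) + (a - e) := by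
      have : q * b = b * q := Nat.mul_comm q b
      omega
    rw [key, Nat.mul_add_div ha, Nat.div_eq_of_lt (by omega)]
    omega
  · simp only [Sab, Finset.mem_image, Finset.mem_Icc]
    refine ⟨a - q, ⟨by omega, by omega⟩, ?_⟩
    have h6 : a * (b-d) + a * d = a * b := by
      calc a*(b-d) + a*d = a*((b-d)+d) := by ring
      _ = a*b := by congr 1; omega
    have h7 : (a-q)*b + q*b = a*b := by
      calc (a-q)*b + q*b = ((a-q)+q)*b := by ring
      _ = a*b := by congr 1; omega
    have key : (a - q) * b = a * (b - d) + e := by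
      have : q*b = b*q := Nat.mul_comm q b
      omega
    rw [key, Nat.mul_add_div ha, Nat.div_eq_of_lt (by omega)]
    omega

lemma OG_extract {a b : ℕ} (hab : a < b) {p q m : ℕ} (hpq : p < q)
    (hpm : p + 2 ≤ m) (hqm : q + 2 ≤ m) (hq1 : 1 ≤ q)
    (D : DyckPath a b) {yp yq : ℕ}
    (hbq : BottomNorth a b D q yq)
    (hlp : IsLaserDiag a b D p yp m) (hlq : IsLaserDiag a b D q yq m) :
    a * (m - p) % b < a * (m - q) % b := by
  have hb : 0 < b := by omega
  have hitp : b * D.h (m-1) < b * yp + a * (m - p) := hlp.2.2.1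
  have hitq : b * D.h (m-1) < b * yq + a * (m - q) := hlq.2.2.1
  have hup : b * yp + a * (m - 1 - p) < b * D.h (m-2) := by
    have h0 := hlp.2.2.2 (m-2) (by omega) (by omega)
    have h9 : m - 2 + 1 - p = m - 1 - p := by omega
    rwa [h9] at h0
  have huq : b * yq + a * (m - 1 - q) < b * D.h (m-2) := by
    have h0 := hlq.2.2.2 (m-2) (by omega) (by omega)
    have h9 : m - 2 + 1 - q = m - 1 - q := by omega
    rwa [h9] at h0
  have hmono : b * D.h (m-2) ≤ b * D.h (m-1) := Nat.mul_le_mul_left b (D.mono (by omega))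
  have hap : a * (m - p) = a * (m - 1 - p) + a := by
    calc a * (m-p) = a * ((m-1-p) + 1) := by congr 1; omega
    _ = a * (m-1-p) + a := by ring
  have haq : a * (m - q) = a * (m - 1 - q) + a := by
    calc a * (m-q) = a * ((m-1-q) + 1) := by congr 1; omega
    _ = a * (m-1-q) + a := by ring
  have hcross : b * yp + a * (q - p) < b * D.h (q-1) := by
    have h0 := hlp.2.2.2 (q-1) (by omega) (by omega)
    have h9 : q - 1 + 1 - p = q - p := by omega
    rwa [h9] at h0
  have hyq : b * D.h (q-1) ≤ b * yq := by
    have h0 := hbq.2.1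
    rw [if_neg (by omega)] at h0
    exact Nat.mul_le_mul_left b h0
  have hsplit : a * (m - p) = a * (q - p) + a * (m - q) := by
    calc a*(m-p) = a*((q-p) + (m-q)) := by congr 1; omega
    _ = a * (q-p) + a * (m-q) := by ring
  have hrp : a * (m - p) % b = b * yp + a * (m-p) - b * D.h (m-1) := by
    rw [← Nat.mul_add_mod b yp (a * (m-p))]
    exact OG_sub_mul_mod hb hitp (by omega)
  have hrq : a * (m - q) % b = b * yq + a * (m-q) - b * D.h (m-1) := by
    rw [← Nat.mul_add_mod b yq (a * (m-q))]
    exact OG_sub_mul_mod hb hitq (by omega)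
  omega

end OGAux

lemma OG_construct {a b x x' m : ℕ} (ha : 0 < a) (hab : a < b)
    (hxx : x < x') (hxm : x' + 2 ≤ m) (hmb : m ≤ b)
    (e1 : 1 ≤ a * (m - x) % b) (e2' : a * (m - x') % b ≤ a - 1)
    (hlt : a * (m - x) % b < a * (m - x') % b) :
    ∃ D : DyckPath a b, (x, m) ∈ FD a b D ∧ (x', m) ∈ FD a b D := by
  have hb : 0 < b := by omega
  set t := a * (b - m) % b with ht
  set ex := a * (m - x) % b with hex
  set ex' := a * (m - x') % b with hex'
  set c := t + ex with hcdef
  set c' := t + ex' with hc'def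
  have htb : t < b := Nat.mod_lt _ hb
  have hexa : ex ≤ a - 1 := by omega
  have hta : t ≤ a * (b - m) := Nat.mod_le _ _
  have hcc' : c < c' := by omega
  have hc'a : c' < t + a := by omega
  have hct : t < c := by omega
  -- divisibility facts
  have hdvd1 : b ∣ (a * x + c) := by
    have m1 : a * (b-m) % b ≡ a * (b-m) [MOD b] := Nat.mod_modEq _ _
    have m2 : a * (m-x) % b ≡ a * (m-x) [MOD b] := Nat.mod_modEq _ _
    have m3 : a*x + c ≡ a*x + (a*(b-m) + a*(m-x)) [MOD b] :=
      Nat.ModEq.add_left _ (Nat.ModEq.add m1 m2)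
    have h4 : a*x + (a*(b-m) + a*(m-x)) = a*b := by
      calc a*x + (a*(b-m) + a*(m-x)) = a * (x + ((b-m) + (m-x))) := by ring
      _ = a * b := by congr 1; omega
    have h5 : (a*x + c) % b = (a*b) % b := by rw [← h4]; exact m3
    rw [Nat.mul_mod_left] at h5
    exact Nat.dvd_of_mod_eq_zero h5
  have hdvd2 : b ∣ (a * x' + c') := by
    have m1 : a * (b-m) % b ≡ a * (b-m) [MOD b] := Nat.mod_modEq _ _
    have m2 : a * (m-x') % b ≡ a * (m-x') [MOD b] := Nat.mod_modEq _ _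
    have m3 : a*x' + c' ≡ a*x' + (a*(b-m) + a*(m-x')) [MOD b] :=
      Nat.ModEq.add_left _ (Nat.ModEq.add m1 m2)
    have h4 : a*x' + (a*(b-m) + a*(m-x')) = a*b := by
      calc a*x' + (a*(b-m) + a*(m-x')) = a * (x' + ((b-m) + (m-x'))) := by ring
      _ = a * b := by congr 1; omega
    have h5 : (a*x' + c') % b = (a*b) % b := by rw [← h4]; exact m3
    rw [Nat.mul_mod_left] at h5
    exact Nat.dvd_of_mod_eq_zero h5
  have hdvdH : b ∣ (a * m + t) := by
    have m1 : a * (b-m) % b ≡ a * (b-m) [MOD b] := Nat.mod_modEq _ _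
    have m3 : a*m + t ≡ a*m + a*(b-m) [MOD b] := Nat.ModEq.add_left _ m1
    have h4 : a*m + a*(b-m) = a*b := by
      calc a*m + a*(b-m) = a * (m + (b-m)) := by ring
      _ = a * b := by congr 1; omega
    have h5 : (a*m + t) % b = (a*b) % b := by rw [← h4]; exact m3
    rw [Nat.mul_mod_left] at h5
    exact Nat.dvd_of_mod_eq_zero h5
  set yx := (a*x + c)/b with hyxdef
  set yx' := (a*x' + c')/b with hyx'def
  set H := (a*m + t)/b with hHdef
  have byx : b * yx = a * x + c := Nat.mul_div_cancel' hdvd1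
  have byx' : b * yx' = a * x' + c' := Nat.mul_div_cancel' hdvd2
  have bH : b * H = a * m + t := Nat.mul_div_cancel' hdvdH
  have haxx : a * x + a ≤ a * x' := by
    calc a * x + a = a * (x+1) := by ring
    _ ≤ a * x' := Nat.mul_le_mul_left a (by omega)
  have hyy : b * yx < b * yx' := by omega
  have hyxyx' : yx < yx' := lt_of_mul_lt_mul_left hyy (Nat.zero_le b)
  have hHa : H ≤ a := by
    have h4 : a*m + a*(b-m) = a*b := by
      calc a*m + a*(b-m) = a * (m + (b-m)) := by ring
      _ = a * b := by congr 1; omega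
    have cab : a*b = b*a := Nat.mul_comm a b
    have : b * H ≤ b * a := by omega
    exact Nat.le_of_mul_le_mul_left this hb
  classical
  set h : ℕ → ℕ := (fun u =>
    if b ≤ u then a
    else if m - 1 ≤ u then max H ((a*(u+1) + (b-1))/b)
    else if x' ≤ u then (a*(u+1) + c')/b + 1
    else if x' - 1 ≤ u then yx'
    else if x ≤ u then (a*(u+1) + c)/b + 1
    else (a*(u+1) + (b-1))/b) with hdefh
  have hval_a : ∀ u, b ≤ u → h u = a := by
    intro u hu; simp only [hdefh]; rw [if_pos hu]
  have hval_top : ∀ u, m - 1 ≤ u → u < b → h u = max H ((a*(u+1) + (b-1))/b) := by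
    intro u h1 h2; simp only [hdefh]; rw [if_neg (by omega), if_pos h1]
  have hval_c' : ∀ u, x' ≤ u → u + 2 ≤ m → h u = (a*(u+1) + c')/b + 1 := by
    intro u h1 h2; simp only [hdefh]
    rw [if_neg (by omega), if_neg (by omega), if_pos h1]
  have hval_mid : h (x' - 1) = yx' := by
    simp only [hdefh]
    rw [if_neg (by omega), if_neg (by omega), if_neg (by omega), if_pos (by omega)]
  have hval_c : ∀ u, x ≤ u → u + 2 ≤ x' → h u = (a*(u+1) + c)/b + 1 := by
    intro u h1 h2; simp only [hdefh]
    rw [if_neg (by omega), if_neg (by omega), if_neg (by omega), if_neg (by omega),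
      if_pos h1]
  have hval_low : ∀ u, u < x → h u = (a*(u+1) + (b-1))/b := by
    intro u h1; simp only [hdefh]
    rw [if_neg (by omega), if_neg (by omega), if_neg (by omega), if_neg (by omega),
      if_neg (by omega)]
  -- ceiling helper facts
  have ceil_ge : ∀ v, v ≤ b * ((v + (b-1))/b) := by
    intro v
    have := OG_bdiv hb (v + (b-1))
    omega
  have floor_lt : ∀ v, v < b * (v/b + 1) := by
    intro v
    have := OG_bdiv hb v
    have : b * (v/b + 1) = b * (v/b) + b := by ring
    omega
  have hmono : ∀ u, h u ≤ h (u+1) := by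
    intro u
    rcases Nat.lt_or_ge u b with hub | hub
    swap
    · rw [hval_a u hub, hval_a (u+1) (by omega)]
    rcases Nat.lt_or_ge (u+1) b with hub1 | hub1
    swap
    · rw [hval_a (u+1) hub1, hval_top u (by omega) hub]
      have hceil : (a*(u+1) + (b-1))/b ≤ a := OG_div_le_of_lt_mul hb (by
        have h1 : b * (a+1) = b*a + b := by ring
        have h2 : a*(u+1) ≤ a * b := Nat.mul_le_mul_left a (by omega)
        have h3 : a*b = b*a := Nat.mul_comm a b
        omega)
      exact max_le hHa hceil
    rcases Nat.lt_or_ge u (m-1) with hum | hum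
    swap
    · rw [hval_top u hum hub, hval_top (u+1) (by omega) hub1]
      have h0 : (a*(u+1) + (b-1))/b ≤ (a*(u+1+1) + (b-1))/b := Nat.div_le_div_right (by
        have h1 : a*(u+1) ≤ a*(u+1+1) := Nat.mul_le_mul_left a (by omega)
        omega)
      exact max_le (le_max_left _ _) (le_trans h0 (le_max_right _ _))
    rcases Nat.lt_or_ge (u+1) (m-1) with hum1 | hum1
    swap
    · rw [hval_c' u (by omega) (by omega), hval_top (u+1) hum1 hub1]
      refine le_trans (OG_div_succ_le hb ?_) (le_max_left _ _)
      have h1 : a*(u+1) + a = a*m := by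
        calc a*(u+1) + a = a*(u+2) := by ring
        _ = a*m := by congr 1; omega
      omega
    rcases Nat.lt_or_ge u x' with hux' | hux'
    swap
    · rw [hval_c' u hux' (by omega), hval_c' (u+1) (by omega) (by omega)]
      have h1 : a*(u+1) + c' ≤ a*(u+1+1) + c' := by
        have := Nat.mul_le_mul_left a (show u+1 ≤ u+1+1 by omega); omega
      exact Nat.add_le_add_right (Nat.div_le_div_right h1) 1
    rcases Nat.lt_or_ge u (x'-1) with hux1 | hux1
    swap
    · have hux : u = x'-1 := by omega
      rw [hux, hval_mid, hval_c' (x'-1+1) (by omega) (by omega)]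
      have h1 : b * yx' ≤ a*(x'-1+1+1) + c' := by
        have h2 : a * x' ≤ a * (x'-1+1+1) := Nat.mul_le_mul_left a (by omega)
        omega
      exact le_trans (OG_le_div_of_mul_le hb h1) (by omega)
    rcases Nat.lt_or_ge u x with hux | hux
    swap
    · rcases Nat.lt_or_ge (u+1) (x'-1) with h2 | h2
      · rw [hval_c u hux (by omega), hval_c (u+1) (by omega) (by omega)]
        have h1 : a*(u+1) + c ≤ a*(u+1+1) + c := by
          have := Nat.mul_le_mul_left a (show u+1 ≤ u+1+1 by omega); omega
        exact Nat.add_le_add_right (Nat.div_le_div_right h1) 1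
      · have hu1 : u+1 = x'-1 := by omega
        rw [hval_c u hux (by omega), hu1, hval_mid]
        apply OG_div_succ_le hb
        have h3 : a*(x'-1) ≤ a*x' := Nat.mul_le_mul_left a (by omega)
        omega
    · rcases Nat.lt_or_ge (u+1) x with h2 | h2
      · rw [hval_low u hux, hval_low (u+1) h2]
        apply Nat.div_le_div_right
        have := Nat.mul_le_mul_left a (show u+1 ≤ u+1+1 by omega); omega
      · have hu1 : u+1 = x := by omega
        rw [hval_low u hux]
        have hc1 : (a*(u+1) + (b-1))/b ≤ yx := OG_div_le_of_lt_mul hb (by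
          have h4 : b*(yx+1) = b*yx + b := by ring
          rw [hu1]
          omega)
        rcases Nat.lt_or_ge (u+1+1) x' with h3 | h3
        · rw [hval_c (u+1) (by omega) (by omega)]
          refine le_trans hc1 (le_trans ?_ (Nat.le_succ _))
          apply OG_le_div_of_mul_le hb
          have h5 : a*x ≤ a*(u+1+1) := Nat.mul_le_mul_left a (by omega)
          omega
        · have h6 : u+1 = x'-1 := by omega
          have h7 : h (u+1) = yx' := by rw [h6]; exact hval_mid
          rw [h7]
          exact le_trans hc1 (le_of_lt hyxyx')
  have habove : ∀ u, u < b → a*(u+1) ≤ b * h u := by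
    intro u hub
    rcases Nat.lt_or_ge u (m-1) with h1 | h1
    swap
    · rw [hval_top u h1 hub]
      exact le_trans (ceil_ge (a*(u+1))) (Nat.mul_le_mul_left b (le_max_right _ _))
    rcases Nat.lt_or_ge u x' with h2 | h2
    swap
    · rw [hval_c' u h2 (by omega)]
      have := floor_lt (a*(u+1) + c')
      omega
    rcases Nat.lt_or_ge u (x'-1) with h3 | h3
    swap
    · have hu : u = x'-1 := by omega
      rw [hu, hval_mid]
      have h5 : a*(x'-1+1) = a*x' := by congr 1; omega
      omega
    rcases Nat.lt_or_ge u x with h4 | h4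
    swap
    · rw [hval_c u h4 (by omega)]
      have := floor_lt (a*(u+1) + c)
      omega
    · rw [hval_low u h4]
      exact ceil_ge _
  set D : DyckPath a b := ⟨h, monotone_nat_of_le_succ hmono, hval_a, habove⟩ with hD
  have hDh : D.h = h := rfl
  have hm1top : h (m-1) = H := by
    rw [hval_top (m-1) (le_refl _) (by omega)]
    have hceil : (a*(m-1+1) + (b-1))/b ≤ H := OG_div_le_of_lt_mul hb (by
      have hmm : a*(m-1+1) = a*m := by congr 1; omega
      have h7 : b*(H+1) = b*H + b := by ring
      omega)
    exact max_eq_left hceil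
  refine ⟨D, ?_, ?_⟩
  · simp only [FD, Set.mem_setOf_eq]
    refine ⟨yx, ⟨by omega, ?_, ?_⟩, ?_, ⟨by omega, by omega, ?_, ?_⟩⟩
    · -- lower bound
      by_cases hx0 : x = 0
      · rw [if_pos hx0]; exact Nat.zero_le _
      · rw [if_neg hx0, hDh, hval_low (x-1) (by omega)]
        apply OG_div_le_of_lt_mul hb
        have hxx1 : a*(x-1+1) = a*x := by congr 1; omega
        have h7 : b*(yx+1) = b*yx + b := by ring
        omega
    · -- upper: yx < h x
      rw [hDh]
      rcases Nat.lt_or_ge (x+1) x' with h3 | h3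
      · rw [hval_c x (le_refl x) (by omega)]
        have h8 : yx ≤ (a*(x+1)+c)/b := OG_le_div_of_mul_le hb (by
          have := Nat.mul_le_mul_left a (show x ≤ x+1 by omega); omega)
        omega
      · have hx1 : x = x'-1 := by omega
        rw [show x = x'-1 from hx1, hval_mid]
        exact hyxyx'
    · -- ≠ (0,0)
      intro hpair
      simp only [Prod.mk.injEq] at hpair
      obtain ⟨hx0, hy0⟩ := hpair
      rw [hx0, hy0, Nat.mul_zero, Nat.mul_zero] at byx
      omega
    · -- hit
      rw [hDh, hm1top]
      have hsplit : a*x + a*(m-x) = a*m := by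
        calc a*x + a*(m-x) = a*(x+(m-x)) := by ring
        _ = a*m := by congr 1; omega
      omega
    · -- laser forall
      intro u hu1 hu2
      rw [hDh]
      have hsplit : a*x + a*(u+1-x) = a*(u+1) := by
        calc a*x + a*(u+1-x) = a*(x+(u+1-x)) := by ring
        _ = a*(u+1) := by congr 1; omega
      rcases Nat.lt_or_ge u (x'-1) with h3 | h3
      · rw [hval_c u hu1 (by omega)]
        have := floor_lt (a*(u+1)+c)
        have hmul : b*((a*(u+1)+c)/b + 1) = b*((a*(u+1)+c)/b) + b := by ring
        omega
      rcases Nat.lt_or_ge u x' with h4 | h4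
      · have hu : u = x'-1 := by omega
        rw [hu, hval_mid]
        have hs2 : a*x + a*(x'-1+1-x) = a*x' := by
          calc a*x + a*(x'-1+1-x) = a*(x+(x'-1+1-x)) := by ring
          _ = a*x' := by congr 1; omega
        omega
      · rw [hval_c' u h4 (by omega)]
        have := floor_lt (a*(u+1)+c')
        have hmul : b*((a*(u+1)+c')/b + 1) = b*((a*(u+1)+c')/b) + b := by ring
        omega
  · simp only [FD, Set.mem_setOf_eq]
    refine ⟨yx', ⟨by omega, ?_, ?_⟩, ?_, ⟨by omega, by omega, ?_, ?_⟩⟩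
    · rw [if_neg (by omega), hDh, hval_mid]
    · rw [hDh, hval_c' x' (le_refl _) (by omega)]
      have h8 : yx' ≤ (a*(x'+1)+c')/b := OG_le_div_of_mul_le hb (by
        have := Nat.mul_le_mul_left a (show x' ≤ x'+1 by omega); omega)
      omega
    · intro hpair
      simp only [Prod.mk.injEq] at hpair
      omega
    · rw [hDh, hm1top]
      have hsplit : a*x' + a*(m-x') = a*m := by
        calc a*x' + a*(m-x') = a*(x'+(m-x')) := by ring
        _ = a*m := by congr 1; omega
      omega
    · intro u hu1 hu2
      rw [hDh, hval_c' u hu1 (by omega)]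
      have hsplit : a*x' + a*(u+1-x') = a*(u+1) := by
        calc a*x' + a*(u+1-x') = a*(x'+(u+1-x')) := by ring
        _ = a*(u+1) := by congr 1; omega
      have := floor_lt (a*(u+1)+c')
      have hmul : b*((a*(u+1)+c')/b + 1) = b*((a*(u+1)+c')/b) + b := by ring
      omega


/-- Suppose `im`, `jm` are `a,b`-admissible with `i < j < m` and `{im, jm}` is an edge
of `OG(a,b)`; suppose `i < k < j`, `km` is `a,b`-admissible, and `{km, jm}` is not an
edge of `OG(a,b)`.  Then `{im, km}` is an edge of `OG(a,b)` and `ik` is an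
`a,b`-admissible diagonal. -/
theorem OGEdge_completing_half_wedge (a b i j k m : ℕ) (ha : 0 < a) (hab : a < b)
    (hcop : Nat.Coprime a b) (hij : i < j) (hjm : j < m) (hik : i < k) (hkj : k < j)
    (h1 : Admissible a b (i, m)) (h2 : Admissible a b (j, m))
    (h3 : Admissible a b (k, m))
    (he : OGEdge a b (i, m) (j, m)) (hne : ¬OGEdge a b (k, m) (j, m)) :
    OGEdge a b (i, m) (k, m) ∧ Admissible a b (i, k) := by
  have hb : 0 < b := by omega
  have h1' := h1; have h2' := h2; have h3' := h3
  simp only [Admissible, IsDiagonal] at h1' h2' h3'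
  obtain ⟨⟨hi2, hmbi, hnei⟩, hSi1, hSi2⟩ := h1'
  obtain ⟨⟨hj2, hmbj, hnej⟩, hSj1, hSj2⟩ := h2'
  obtain ⟨⟨hk2, hmbk, hnek⟩, hSk1, hSk2⟩ := h3'
  have hori : i ≠ 0 ∨ m ≠ b := by tauto
  have hmib : m - i < b := by omega
  have hmjb : m - j < b := by omega
  have hmkb : m - k < b := by omega
  have hEI := OG_crit_of_adm ha hab (d := m - i) (by omega) hmib hSi1
    (by rw [show b - (m - i) = b - m + i by omega]; exact hSi2)
  have hEJ := OG_crit_of_adm ha hab (d := m - j) (by omega) hmjb hSj1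
    (by rw [show b - (m - j) = b - m + j by omega]; exact hSj2)
  have hEK := OG_crit_of_adm ha hab (d := m - k) (by omega) hmkb hSk1
    (by rw [show b - (m - k) = b - m + k by omega]; exact hSk2)
  -- e_i ≠ e_j
  have hne_ij : a*(m-i) % b ≠ a*(m-j) % b := by
    intro heq
    have hsplit : a*(m-i) = a*(m-j) + a*(j-i) := by
      calc a*(m-i) = a*((m-j)+(j-i)) := by congr 1; omega
      _ = a*(m-j) + a*(j-i) := by ring
    have hmod : a*(j-i) ≡ 0 [MOD b] := by
      have hc1 : a*(m-j) + a*(j-i) ≡ a*(m-j) + 0 [MOD b] := by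
        rw [Nat.add_zero, ← hsplit]
        exact heq
      exact Nat.ModEq.add_left_cancel' _ hc1
    have hdvd : b ∣ a * (j-i) := Nat.modEq_zero_iff_dvd.mp hmod
    have hdvd2 : b ∣ (j - i) := hcop.symm.dvd_of_dvd_mul_left hdvd
    have := Nat.le_of_dvd (by omega) hdvd2
    omega
  -- from ¬OGEdge (k,m) (j,m): the pair is a face of Ass
  have hcr : ∀ p q : ℕ, ¬ Crosses (p, m) (q, m) := by
    intro p q
    simp only [Crosses]
    omega
  have hkjface : ({((k:ℕ), m), ((j:ℕ), m)} : Finset (ℕ × ℕ)) ∈ (Ass a b).faces := by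
    by_contra hcon
    apply hne
    refine ⟨?_, ?_, hcon⟩
    · intro hq
      rw [Prod.mk.injEq] at hq
      omega
    · simp only [hatAss, Set.mem_setOf_eq]
      constructor
      · intro d hd
        rcases Finset.mem_insert.mp hd with rfl | hd
        · exact h3
        · rw [Finset.mem_singleton] at hd; subst hd; exact h2
      · intro d hd d' hd'
        rcases Finset.mem_insert.mp hd with rfl | hd
        · rcases Finset.mem_insert.mp hd' with rfl | hd'
          · exact hcr _ _
          · rw [Finset.mem_singleton] at hd'; subst hd'; exact hcr _ _
        · rw [Finset.mem_singleton] at hd; subst hd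
          rcases Finset.mem_insert.mp hd' with rfl | hd'
          · exact hcr _ _
          · rw [Finset.mem_singleton] at hd'; subst hd'; exact hcr _ _
  simp only [Ass, Set.mem_setOf_eq] at hkjface
  obtain ⟨D0, hD0⟩ := hkjface
  obtain ⟨yk, hbk, hk0, hlk⟩ := hD0 (k, m) (Finset.mem_insert_self _ _)
  obtain ⟨yj, hbj, hj0, hlj⟩ := hD0 (j, m) (by simp)
  have step1 : a*(m-k) % b < a*(m-j) % b :=
    OG_extract hab hkj (by omega) (by omega) (by omega) D0 hbj hlk hlj
  -- e_j < e_i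
  have step2 : a*(m-j) % b < a*(m-i) % b := by
    rcases Nat.lt_trichotomy (a*(m-i)%b) (a*(m-j)%b) with hlt | heq | hgt
    · exfalso
      obtain ⟨D, hDm1, hDm2⟩ := OG_construct ha hab hij (by omega) (by omega)
        (by omega) (by omega) hlt
      apply he.2.2
      simp only [Ass, Set.mem_setOf_eq]
      refine ⟨D, ?_⟩
      intro d hd
      rcases Finset.mem_insert.mp hd with rfl | hd
      · exact hDm1
      · rw [Finset.mem_singleton] at hd; subst hd; exact hDm2
    · exact absurd heq hne_ij
    · exact hgt
  -- {(i,m),(k,m)} is not a face of Ass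
  have hikns : ({((i:ℕ), m), ((k:ℕ), m)} : Finset (ℕ × ℕ)) ∉ (Ass a b).faces := by
    intro hmem
    simp only [Ass, Set.mem_setOf_eq] at hmem
    obtain ⟨D1, hD1⟩ := hmem
    obtain ⟨yi, hbi, hi0, hli⟩ := hD1 (i, m) (Finset.mem_insert_self _ _)
    obtain ⟨yk1, hbk1, hk01, hlk1⟩ := hD1 (k, m) (by simp)
    have h00 : a*(m-i) % b < a*(m-k) % b :=
      OG_extract hab hik (by omega) (by omega) (by omega) D1 hbk1 hli hlk1
    omega
  have hatface : ({((i:ℕ), m), ((k:ℕ), m)} : Finset (ℕ × ℕ)) ∈ (hatAss a b).faces := by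
    simp only [hatAss, Set.mem_setOf_eq]
    constructor
    · intro d hd
      rcases Finset.mem_insert.mp hd with rfl | hd
      · exact h1
      · rw [Finset.mem_singleton] at hd; subst hd; exact h3
    · intro d hd d' hd'
      rcases Finset.mem_insert.mp hd with rfl | hd
      · rcases Finset.mem_insert.mp hd' with rfl | hd'
        · exact hcr _ _
        · rw [Finset.mem_singleton] at hd'; subst hd'; exact hcr _ _
      · rw [Finset.mem_singleton] at hd; subst hd
        rcases Finset.mem_insert.mp hd' with rfl | hd'
        · exact hcr _ _
        · rw [Finset.mem_singleton] at hd'; subst hd'; exact hcr _ _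
  -- Admissibility of (i,k)
  have hsplit : a*(m-i) = a*(m-k) + a*(k-i) := by
    calc a*(m-i) = a*((m-k)+(k-i)) := by congr 1; omega
    _ = a*(m-k) + a*(k-i) := by ring
  set w := a*(m-i)%b - a*(m-k)%b with hw
  have hw1 : 1 ≤ w := by omega
  have hw2 : w ≤ a - 1 := by omega
  have hsum : a*(m-k) % b + w = a*(m-i) % b := by omega
  have hc1 : a*(m-k)%b + a*(k-i) ≡ a*(m-i) [MOD b] := by
    rw [hsplit]
    exact Nat.ModEq.add_right _ (Nat.mod_modEq _ _)
  have hc2 : a*(m-i) ≡ a*(m-k)%b + w [MOD b] := by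
    rw [hsum]
    exact (Nat.mod_modEq _ _).symm
  have hc3 : a*(k-i)%b = w % b := Nat.ModEq.add_left_cancel' _ (hc1.trans hc2)
  have hcrit : a*(k-i) % b = w := by
    rw [hc3]
    exact Nat.mod_eq_of_lt (by omega)
  obtain ⟨hd2, hS1, hS2⟩ := OG_adm_of_crit ha hab (show 1 ≤ k - i by omega)
    (show k - i < b by omega) (by omega) (by omega)
  refine ⟨⟨?_, hatface, hikns⟩, ⟨⟨by omega, by omega, by omega⟩, hS1, ?_⟩⟩
  · intro hq
    rw [Prod.mk.injEq] at hq
    omega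
  · have h9 : b - k + i ∈ Sab a b := by
      rw [show b - k + i = b - (k - i) from by omega]
      exact hS2
    exact h9
end

section
/- Let a < b be coprime positive integers with b ≡ 1 (mod a). Then the obstruction graph OG(a,b) has no edges; equivalently, Âss(a,b) = Ass(a,b), i.e., every set of pairwise noncrossing a,b-admissible diagonals of P_{b+1} is contained in F(D) for some a,b-Dyck path D. -/
/-!
In the Fuss case `b = a m + 1` the admissible diagonals are exactly the pairs
`(i, i + s m + 1)` with `0 < s < a`, and the laser from a point `(i, y)` of a Dyck path hits
the east step ending at `i + s m + 1` precisely when that step has height `y + s` and the path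
stays on or above the staircase rising by one every `m` columns from `(i, y + 1)`.
Given a noncrossing family `F`, the highest path with `h x ≤ h (j - 1) - s` for every
`(i, j) ∈ F` with `x < i` has this property for every member of `F`: the diagonals of `F`
nested inside `(i, j)` only impose constraints compatible with the staircase, as a downward
induction on the column shows. Conversely, lasers of one path never cross, and the arithmetic
of `b = a m + 1` forces every laser diagonal into the admissible shape.
-/

section Laser

variable {a b : ℕ}

/-- The laser from `(x, y)` passes below `(x', y')`; being parallel, it stays below the laser
from `(x', y')`, so the latter hits the path no later. -/
theorem laserDiag_le_of_lt_of_lt {D : DyckPath a b} {x y k x' y' k' : ℕ}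
    (hL : IsLaserDiag a b D x y k) (hP' : BottomNorth a b D x' y')
    (hL' : IsLaserDiag a b D x' y' k') (hx : x < x') (hx' : x' < k) : k' ≤ k := by
  obtain ⟨-, -, hhit, hbelow⟩ := hL
  obtain ⟨-, -, -, hbelow'⟩ := hL'
  by_contra! hk
  have hlow : D.h (x' - 1) ≤ y' := by simpa [show x' ≠ 0 by omega] using hP'.2.1
  have h1 := hbelow (x' - 1) (by omega) (by omega)
  have h2 := hbelow' (k - 1) (by omega) (by omega)
  rw [show x' - 1 + 1 - x = x' - x by omega] at h1
  rw [show k - 1 + 1 - x' = k - x' by omega] at h2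
  have hsplit : a * (k - x) = a * (x' - x) + a * (k - x') := by
    rw [← Nat.mul_add, show x' - x + (k - x') = k - x by omega]
  have := Nat.mul_le_mul_left b hlow
  omega

theorem not_crosses_of_mem_FD {D : DyckPath a b} {d d' : ℕ × ℕ}
    (hd : d ∈ FD a b D) (hd' : d' ∈ FD a b D) : ¬Crosses d d' := by
  obtain ⟨y, hP, -, hL⟩ := hd
  obtain ⟨y', hP', -, hL'⟩ := hd'
  rintro (⟨h1, h2, h3⟩ | ⟨h1, h2, h3⟩)
  · exact absurd (laserDiag_le_of_lt_of_lt hL hP' hL' h1 h2) (by omega)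
  · exact absurd (laserDiag_le_of_lt_of_lt hL' hP hL h1 h2) (by omega)

theorem laser_bounds (hab : a < b) {D : DyckPath a b} {x y k : ℕ}
    (hP : BottomNorth a b D x y) (hL : IsLaserDiag a b D x y k) :
    a * (k - x - 1) < b * (D.h (k - 1) - y) ∧ b * (D.h (k - 1) - y) < a * (k - x) := by
  obtain ⟨hxk, -, hhit, hbelow⟩ := hL
  have hy : y < D.h (k - 1) := hP.2.2.trans_le (D.mono (by omega))
  have hsub : b * (D.h (k - 1) - y) = b * D.h (k - 1) - b * y := Nat.mul_sub b _ _
  have hby : b * y < b * D.h (k - 1) := Nat.mul_lt_mul_of_pos_left hy (by omega)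
  have hk : x + 2 ≤ k := by
    by_contra hk
    have hstep : b * (y + 1) ≤ b * D.h x := Nat.mul_le_mul_left b hP.2.2
    rw [show k = x + 1 by omega, Nat.add_sub_cancel, Nat.add_sub_cancel_left] at hhit
    nlinarith
  have hprev := hbelow (k - 2) (by omega) (by omega)
  have hmono := Nat.mul_le_mul_left b (D.mono (show k - 2 ≤ k - 1 by omega))
  rw [show k - 2 + 1 - x = k - x - 1 by omega] at hprev
  exact ⟨by omega, by omega⟩

end Laser

namespace Fuss

variable {a b m : ℕ}

theorem Sab_fuss (a m : ℕ) : Sab a (a * m + 1) = (Finset.Icc 1 (a - 1)).image (· * m) := by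
  refine Finset.image_congr fun i hi => ?_
  have hia : i < a := by have := Finset.mem_Icc.1 hi; omega
  show i * (a * m + 1) / a = i * m
  rw [show i * (a * m + 1) = a * (i * m) + i by ring, Nat.mul_add_div (by omega),
    Nat.div_eq_of_lt hia, add_zero]

theorem admissible_fuss_iff (hm : 0 < m) {d : ℕ × ℕ} :
    Admissible a (a * m + 1) d ↔
      d.2 ≤ a * m + 1 ∧ ∃ s, 0 < s ∧ s < a ∧ d.2 = d.1 + s * m + 1 := by
  simp only [Admissible, IsDiagonal, Sab_fuss, Finset.mem_image, Finset.mem_Icc]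
  constructor
  · rintro ⟨⟨hij, hjb, -⟩, ⟨s, ⟨hs1, hsa⟩, hs⟩, -⟩
    exact ⟨hjb, s, hs1, by omega, by omega⟩
  · rintro ⟨hjb, s, hs0, hsa, hj⟩
    have hsm : 0 < s * m := Nat.mul_pos hs0 hm
    have hsma : s * m < a * m := Nat.mul_lt_mul_of_pos_right hsa hm
    have hsub : (a - s) * m = a * m - s * m := Nat.sub_mul a s m
    exact ⟨⟨by omega, hjb, by omega⟩, ⟨s, ⟨hs0, by omega⟩, by omega⟩,
      ⟨a - s, ⟨by omega, by omega⟩, by omega⟩⟩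

/-- The number `s` of a diagonal `(i, i + s m + 1)`; the laser along it rises by `s`. -/
def rise (m : ℕ) (d : ℕ × ℕ) : ℕ := (d.2 - d.1 - 1) / m

theorem rise_spec_of_admissible (hm : 0 < m) {d : ℕ × ℕ} (hd : Admissible a (a * m + 1) d) :
    d.2 ≤ a * m + 1 ∧ 0 < rise m d ∧ rise m d < a ∧ d.2 = d.1 + rise m d * m + 1 := by
  obtain ⟨hjb, s, hs0, hsa, hj⟩ := (admissible_fuss_iff hm).1 hd
  have hrise : rise m d = s := by
    rw [rise, show d.2 - d.1 - 1 = s * m by omega, Nat.mul_div_cancel s hm]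
  exact ⟨hjb, hrise ▸ hs0, hrise ▸ hsa, hrise ▸ hj⟩

theorem fuss_laser_length {c Q : ℕ} (hc : c ≤ a * m + 1) (hlo : a * (c - 1) < (a * m + 1) * Q)
    (hhi : (a * m + 1) * Q < a * c) : 0 < Q ∧ Q < a ∧ c = Q * m + 1 := by
  have hQ : (a * m + 1) * Q = a * (Q * m) + Q := by ring
  have hQa : Q < a := by
    by_contra! h
    nlinarith [Nat.mul_le_mul_left (a * m + 1) h, Nat.mul_le_mul_left a hc]
  have hc1 : c - 1 < Q * m + 1 := by
    by_contra! h
    nlinarith [Nat.mul_le_mul_left a h]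
  have hc2 : Q * m < c := by
    by_contra! h
    nlinarith [Nat.mul_le_mul_left a h]
  refine ⟨Nat.pos_of_ne_zero fun h0 => ?_, hQa, by omega⟩
  subst h0
  omega

theorem admissible_of_mem_FD (hm : 0 < m) {D : DyckPath a (a * m + 1)} {d : ℕ × ℕ}
    (hd : d ∈ FD a (a * m + 1) D) : Admissible a (a * m + 1) d := by
  obtain ⟨y, hP, -, hL⟩ := hd
  have hab : a < a * m + 1 := Nat.lt_succ_of_le (Nat.le_mul_of_pos_right a hm)
  obtain ⟨hlo, hhi⟩ := laser_bounds hab hP hL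
  obtain ⟨hQ0, hQa, hc⟩ := fuss_laser_length (by have := hL.2.1; omega) hlo hhi
  exact (admissible_fuss_iff hm).2 ⟨hL.2.1, _, hQ0, hQa, by have := hL.1; omega⟩

def diagsRightOf (b : ℕ) (F : Finset (ℕ × ℕ)) (x : ℕ) : Finset (ℕ × ℕ) :=
  F.filter fun d => x < d.1 ∧ x + 1 < d.2 ∧ d.2 ≤ b

/-- Every recursive call moves strictly to the right, so `b` rounds of fuel suffice
(`heightAux_succ_of_le`). -/
def heightAux (a b m : ℕ) (F : Finset (ℕ × ℕ)) : ℕ → ℕ → ℕ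
  | 0, _ => a
  | n + 1, x => (diagsRightOf b F x).fold min a fun d => heightAux a b m F n (d.2 - 1) - rise m d

/-- The highest path below `a` with `height x ≤ height (j - 1) - rise m d` for every
`d = (i, j) ∈ F` with `x < i`. -/
def height (a b m : ℕ) (F : Finset (ℕ × ℕ)) (x : ℕ) : ℕ := heightAux a b m F b x

variable {F : Finset (ℕ × ℕ)}

theorem diagsRightOf_eq_empty {x : ℕ} (hx : b ≤ x + 1) : diagsRightOf b F x = ∅ :=
  Finset.filter_false_of_mem fun d _ h => by omega

theorem diagsRightOf_antitone {x x' : ℕ} (h : x ≤ x') :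
    diagsRightOf b F x' ⊆ diagsRightOf b F x :=
  Finset.monotone_filter_right F fun d hd => by omega

theorem heightAux_succ_of_le (n x : ℕ) (h : b ≤ x + n + 1) :
    heightAux a b m F (n + 1) x = heightAux a b m F n x := by
  induction n generalizing x with
  | zero => simp [heightAux, diagsRightOf_eq_empty (show b ≤ x + 1 by omega)]
  | succ n ih =>
    refine Finset.fold_congr fun d hd => ?_
    rw [ih (d.2 - 1) (by simp only [diagsRightOf, Finset.mem_filter] at hd; omega)]

theorem height_eq (x : ℕ) :
    height a b m F x =
      (diagsRightOf b F x).fold min a fun d => height a b m F (d.2 - 1) - rise m d := by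
  rw [height, ← heightAux_succ_of_le b x (by omega)]
  rfl

theorem height_le (x : ℕ) : height a b m F x ≤ a := by
  rw [height_eq]
  exact (Finset.fold_min_le _).2 (Or.inl le_rfl)

theorem height_le_sub_rise {x : ℕ} {d : ℕ × ℕ} (hd : d ∈ diagsRightOf b F x) :
    height a b m F x ≤ height a b m F (d.2 - 1) - rise m d := by
  rw [height_eq]
  exact (Finset.fold_min_le _).2 (Or.inr ⟨d, hd, le_rfl⟩)

theorem le_height {c x : ℕ} (hc : c ≤ a)
    (h : ∀ d ∈ diagsRightOf b F x, c ≤ height a b m F (d.2 - 1) - rise m d) :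
    c ≤ height a b m F x := by
  rw [height_eq]
  exact (Finset.le_fold_min _).2 ⟨hc, h⟩

theorem height_mono : Monotone (height a b m F) := fun _ _ h =>
  le_height (height_le _) fun _ hd => height_le_sub_rise (diagsRightOf_antitone h hd)

theorem height_of_le {x : ℕ} (hx : b ≤ x + 1) : height a b m F x = a := by
  rw [height_eq, diagsRightOf_eq_empty hx, Finset.fold_empty]

theorem mul_add_one_lt_mul_div_add_one (hm : 0 < m) (a x : ℕ) :
    a * (x + 1) < (a * m + 1) * (x / m + 1) := by
  have hx := Nat.div_add_mod x m
  have hr := Nat.mul_le_mul_left a (Nat.mod_lt x hm)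
  generalize x / m = q, x % m = r at hx hr
  subst hx
  nlinarith

theorem div_add_lt_of_add_mul_lt (hm : 0 < m) {n r s : ℕ} (h : n + r * m < s * m) :
    n / m + r < s := by
  rwa [← Nat.add_mul_div_right _ _ hm, Nat.div_lt_iff_lt_mul hm]

/-- Inside a diagonal `d` crossing no member of `F`, the path stays on or above the staircase
that starts at height `height (d.2 - 1) - s + 1` in column `d.1` and rises by one every `m`
columns. -/
theorem sub_add_div_le_height (hm : 0 < m) (hF : ∀ d ∈ F, Admissible a (a * m + 1) d)
    {d : ℕ × ℕ} {s : ℕ} (hd : d.2 = d.1 + s * m + 1)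
    (hs : s ≤ height a (a * m + 1) m F (d.2 - 1)) (hcross : ∀ d' ∈ F, ¬Crosses d d')
    {x : ℕ} (hx₁ : d.1 ≤ x) (hx₂ : x + 1 < d.2) :
    height a (a * m + 1) m F (d.2 - 1) - s + ((x - d.1) / m + 1) ≤
      height a (a * m + 1) m F x := by
  induction hn : d.2 - x using Nat.strong_induction_on generalizing x with
  | _ n ih =>
  have hxs := div_add_lt_of_add_mul_lt (r := 0) hm (show x - d.1 + 0 * m < s * m by omega)
  have hHa := height_le (a := a) (b := a * m + 1) (m := m) (F := F) (d.2 - 1)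
  refine le_height (by omega) fun d' hd' => ?_
  obtain ⟨hd'F, hxd', -, -⟩ := Finset.mem_filter.1 hd'
  obtain ⟨hd'b, -, -, hd'₂⟩ := rise_spec_of_admissible hm (hF d' hd'F)
  rcases le_or_gt d.2 d'.1 with hright | hleft
  · have hd'right : d' ∈ diagsRightOf (a * m + 1) F (d.2 - 1) :=
      Finset.mem_filter.2 ⟨hd'F, by omega, by omega, hd'b⟩
    have := height_le_sub_rise (a := a) (m := m) hd'right
    omega
  have hnested : d'.2 ≤ d.2 := by
    by_contra! h
    exact hcross d' hd'F (Or.inl ⟨by omega, hleft, h⟩)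
  rcases hnested.lt_or_eq with hlt | heq
  · have hih := ih (d.2 - (d'.2 - 1)) (by omega) (x := d'.2 - 1) (by omega) (by omega) rfl
    rw [show d'.2 - 1 - d.1 = d'.1 - d.1 + rise m d' * m by omega,
      Nat.add_mul_div_right _ _ hm] at hih
    have := Nat.div_le_div_right (c := m) (show x - d.1 ≤ d'.1 - d.1 by omega)
    omega
  · have hsub : (s - rise m d') * m = s * m - rise m d' * m := Nat.sub_mul _ _ _
    have := div_add_lt_of_add_mul_lt hm (show x - d.1 + rise m d' * m < s * m by omega)
    rw [heq]
    omega

theorem div_add_one_le_height (hm : 0 < m) (hF : ∀ d ∈ F, Admissible a (a * m + 1) d) {x : ℕ}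
    (hx : x < a * m) : x / m + 1 ≤ height a (a * m + 1) m F x := by
  -- the staircase bound for the side `(0, b)` of the polygon, with `s = a`
  have hcross : ∀ d' ∈ F, ¬Crosses (0, a * m + 1) d' := fun d' hd' h => by
    have := (rise_spec_of_admissible hm (hF d' hd')).1
    simp only [Crosses] at h
    omega
  have := sub_add_div_le_height hm hF (d := (0, a * m + 1)) (s := a) (by simp)
    (by rw [height_of_le (by simp)]) hcross (Nat.zero_le x) (by change x + 1 < a * m + 1; omega)
  simpa [height_of_le] using this

theorem rise_lt_height (hm : 0 < m) (hF : ∀ d ∈ F, Admissible a (a * m + 1) d) {d : ℕ × ℕ}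
    (hd : d ∈ F) : rise m d < height a (a * m + 1) m F (d.2 - 1) := by
  obtain ⟨hdb, -, hra, hd₂⟩ := rise_spec_of_admissible hm (hF d hd)
  rcases Nat.lt_or_ge (d.2 - 1) (a * m) with hlt | hge
  · have hdiv : rise m d ≤ (d.2 - 1) / m := by
      rw [show d.2 - 1 = d.1 + rise m d * m by omega, Nat.add_mul_div_right _ _ hm]
      exact Nat.le_add_left _ _
    have := div_add_one_le_height hm hF hlt
    omega
  · rwa [height_of_le (by omega)]

def fussPath (hm : 0 < m) (hF : ∀ d ∈ F, Admissible a (a * m + 1) d) :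
    DyckPath a (a * m + 1) where
  h := height a (a * m + 1) m F
  mono := height_mono
  norm := fun _ hx => height_of_le (by omega)
  above := fun x hx => by
    rcases Nat.lt_or_ge x (a * m) with hlt | hge
    · calc a * (x + 1) ≤ (a * m + 1) * (x / m + 1) := (mul_add_one_lt_mul_div_add_one hm a x).le
        _ ≤ _ := Nat.mul_le_mul_left _ (div_add_one_le_height hm hF hlt)
    · rw [height_of_le (by omega), show x + 1 = a * m + 1 by omega, Nat.mul_comm]

theorem mem_FD_fussPath (hm : 0 < m) (hF : ∀ d ∈ F, Admissible a (a * m + 1) d)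
    (hNC : ∀ d ∈ F, ∀ d' ∈ F, ¬Crosses d d') {d : ℕ × ℕ} (hd : d ∈ F) :
    d ∈ FD a (a * m + 1) (fussPath hm hF) := by
  obtain ⟨hdb, hr0, hra, hd₂⟩ := rise_spec_of_admissible hm (hF d hd)
  set H := height a (a * m + 1) m F
  set r := rise m d
  have hrm : 0 < r * m := Nat.mul_pos hr0 hm
  have hrA : r < H (d.2 - 1) := rise_lt_height hm hF hd
  have hstair :
      ∀ x, d.1 ≤ x → x + 1 < d.2 → H (d.2 - 1) - r + ((x - d.1) / m + 1) ≤ H x :=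
    fun _ => sub_add_div_le_height hm hF hd₂ hrA.le (hNC d hd)
  have hstart := hstair d.1 le_rfl (by omega)
  rw [Nat.sub_self, Nat.zero_div] at hstart
  refine ⟨H (d.2 - 1) - r, ⟨by omega, ?_, by change _ < H d.1; omega⟩, ?_, by omega, hdb, ?_,
    fun u hu₁ hu₂ => ?_⟩
  · change (if d.1 = 0 then 0 else H (d.1 - 1)) ≤ _
    split_ifs with h0
    · exact Nat.zero_le _
    · exact height_le_sub_rise (Finset.mem_filter.2 ⟨hd, by omega, by omega, hdb⟩)
  · rw [Ne, Prod.mk.injEq]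
    omega
  · change (a * m + 1) * H (d.2 - 1) < _
    rw [show d.2 - d.1 = r * m + 1 by omega]
    have hsplit : H (d.2 - 1) = H (d.2 - 1) - r + r := by omega
    nlinarith
  · change _ < (a * m + 1) * H u
    have hlaser := mul_add_one_lt_mul_div_add_one hm a (u - d.1)
    calc (a * m + 1) * (H (d.2 - 1) - r) + a * (u + 1 - d.1)
        < (a * m + 1) * (H (d.2 - 1) - r) + (a * m + 1) * ((u - d.1) / m + 1) := by
          rw [show u + 1 - d.1 = u - d.1 + 1 by omega]; omega
      _ ≤ (a * m + 1) * H u := by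
          rw [← Nat.mul_add]; exact Nat.mul_le_mul_left _ (hstair u hu₁ (by omega))

theorem hatAss_faces_eq_Ass_faces (hm : 0 < m) :
    (hatAss a (a * m + 1)).faces = (Ass a (a * m + 1)).faces := by
  ext F
  constructor
  · rintro ⟨hF, hNC⟩
    exact ⟨fussPath hm hF, fun d hd => mem_FD_fussPath hm hF hNC hd⟩
  · rintro ⟨D, hD⟩
    exact ⟨fun d hd => admissible_of_mem_FD hm (hD d hd),
      fun d hd d' hd' => not_crosses_of_mem_FD (hD d hd) (hD d' hd')⟩

end Fuss

theorem OG_no_edges_of_fuss_general (a b : ℕ) (ha : 0 < a) (hab : a < b)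
    (hmod : b % a = 1) :
    (∀ d d' : ℕ × ℕ, ¬OGEdge a b d d') ∧ (hatAss a b).faces = (Ass a b).faces := by
  obtain ⟨m, hm, rfl⟩ : ∃ m, 0 < m ∧ b = a * m + 1 :=
    ⟨b / a, Nat.div_pos hab.le ha, by have := Nat.div_add_mod b a; omega⟩
  have hfaces := Fuss.hatAss_faces_eq_Ass_faces (a := a) hm
  exact ⟨fun d d' ⟨_, hface, hnot⟩ => hnot (hfaces ▸ hface), hfaces⟩

/-- If `b ≡ 1 (mod a)`, then the obstruction graph `OG(a,b)` has no edges;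
equivalently, `Âss(a,b) = Ass(a,b)`. -/
theorem OG_no_edges_of_fuss (a b : ℕ) (ha : 0 < a) (hab : a < b)
    (hcop : Nat.Coprime a b) (hmod : b % a = 1) :
    (∀ d d' : ℕ × ℕ, ¬OGEdge a b d d') ∧ (hatAss a b).faces = (Ass a b).faces :=
  OG_no_edges_of_fuss_general a b ha hab hmod
end

section
/- Let a < b be coprime positive integers and let 0 ≤ i ≤ b − 1. The number of a,b-admissible diagonals of P_{b+1} with smaller endpoint i (i.e., of the form ij with j > i) equals a − 1 − ⌊ai/b⌋. -/
/-! An admissible diagonal with smaller endpoint `i` is `(i, i + 1 + s)` with `s ∈ S(a,b)` and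
`s < b - i`: the condition on the other side is automatic, because coprimality makes `S(a,b)`
symmetric under `s ↦ b - 1 - s` (no `k b / a` with `0 < k < a` is an integer). The map
`k ↦ ⌊k b / a⌋` is injective on `1, …, a - 1`, and `⌊k b / a⌋ < b - i` as well as
`⌊a i / b⌋ < a - k` both say `k b + a i < a b`, so these `s` are counted by
`1 ≤ k ≤ a - 1 - ⌊a i / b⌋`. -/

open Finset

lemma Nat.mul_div_lt_sub_iff_mul_div_lt_sub {a b : ℕ} (ha : 0 < a) (hb : 0 < b) (k i : ℕ) :
    k * b / a < b - i ↔ a * i / b < a - k := by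
  rw [Nat.div_lt_iff_lt_mul ha, Nat.div_lt_iff_lt_mul hb, Nat.sub_mul, Nat.sub_mul,
    Nat.lt_sub_iff_add_lt, Nat.lt_sub_iff_add_lt, Nat.mul_comm b a, Nat.mul_comm i a, add_comm]

lemma Nat.strictMono_mul_div {a b : ℕ} (ha : 0 < a) (hab : a ≤ b) :
    StrictMono fun k => k * b / a := by
  intro k k' hk
  have hstep : (k * b / a + 1) * a ≤ k' * b := by
    calc (k * b / a + 1) * a ≤ k * b + a := by
          rw [add_mul, one_mul]; exact Nat.add_le_add_right (Nat.div_mul_le_self _ _) _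
      _ ≤ k * b + b := Nat.add_le_add_left hab _
      _ ≤ k' * b := by rw [← Nat.succ_mul]; exact Nat.mul_le_mul_right _ hk
  exact (Nat.le_div_iff_mul_le ha).mpr hstep

/-- The remainder `r` of `k b` modulo `a` is nonzero, so `(a - k) b = (a - r) + a (b - 1 - q)`. -/
lemma Nat.sub_mul_div_of_coprime {a b k : ℕ} (hcop : a.Coprime b) (hk : 0 < k) (hka : k < a) :
    (a - k) * b / a = b - 1 - k * b / a := by
  have ha : 0 < a := hk.trans hka
  have hb : 0 < b := Nat.pos_of_ne_zero fun hb => by simp [hb] at hcop; omega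
  have hr : k * b % a ≠ 0 := fun h =>
    absurd (Nat.le_of_dvd hk (hcop.dvd_of_dvd_mul_right (Nat.dvd_of_mod_eq_zero h))) (by omega)
  have hq : k * b / a < b := Nat.div_lt_of_lt_mul (Nat.mul_lt_mul_of_pos_right hka hb)
  have hdiv := Nat.div_add_mod (k * b) a
  have hrlt := Nat.mod_lt (k * b) ha
  have hsplit : (a - k) * b = (a - k * b % a) + a * (b - 1 - k * b / a) := by
    zify [hka.le, hrlt.le, show k * b / a ≤ b - 1 by omega, show 1 ≤ b by omega] at hdiv ⊢
    linear_combination hdiv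
  rw [hsplit, Nat.add_mul_div_left _ _ ha, Nat.div_eq_of_lt (by omega), zero_add]

namespace Sab

variable {a b : ℕ}

lemma one_le_of_mem (hab : a ≤ b) {s : ℕ} (hs : s ∈ Sab a b) : 1 ≤ s := by
  obtain ⟨k, hk, rfl⟩ := mem_image.mp hs
  rw [mem_Icc] at hk
  exact (Nat.one_le_div_iff (by omega)).mpr (hab.trans (Nat.le_mul_of_pos_left b hk.1))

lemma sub_one_sub_mem (hcop : a.Coprime b) {s : ℕ} (hs : s ∈ Sab a b) : b - 1 - s ∈ Sab a b := by
  obtain ⟨k, hk, rfl⟩ := mem_image.mp hs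
  rw [mem_Icc] at hk
  exact mem_image.mpr
    ⟨a - k, mem_Icc.mpr (by omega), Nat.sub_mul_div_of_coprime hcop (by omega) (by omega)⟩

lemma filter_lt_sub (ha : 0 < a) (hab : a ≤ b) (i : ℕ) :
    (Sab a b).filter (· < b - i) = (Icc 1 (a - 1 - a * i / b)).image fun k => k * b / a := by
  rw [Sab, filter_image]
  congr 1
  ext k
  simp only [mem_filter, mem_Icc]
  by_cases hk : 1 ≤ k ∧ k < a
  · rw [Nat.mul_div_lt_sub_iff_mul_div_lt_sub ha (by omega)]
    omega
  · generalize a * i / b = x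
    omega

lemma card_filter_lt_sub (ha : 0 < a) (hab : a ≤ b) (i : ℕ) :
    #((Sab a b).filter (· < b - i)) = a - 1 - a * i / b := by
  rw [filter_lt_sub ha hab, card_image_of_injective _ (Nat.strictMono_mul_div ha hab).injective,
    Nat.card_Icc, Nat.add_sub_cancel]

end Sab

lemma admissible_iff {a b : ℕ} (hab : a ≤ b) (hcop : a.Coprime b) (i j : ℕ) :
    Admissible a b (i, j) ↔ ∃ s ∈ Sab a b, s < b - i ∧ i + 1 + s = j := by
  constructor
  · rintro ⟨⟨hij, hjb, -⟩, hs, -⟩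
    exact ⟨j - i - 1, hs, by omega, by omega⟩
  · rintro ⟨s, hs, hsi, rfl⟩
    have h₁ := Sab.one_le_of_mem hab hs
    -- `b - 1 - s ≥ 1` also excludes the pair `(0, b)`
    have h₂ := Sab.one_le_of_mem hab (Sab.sub_one_sub_mem hcop hs)
    refine ⟨⟨by omega, by omega, by omega⟩, ?_, ?_⟩
    · convert hs using 1
      omega
    · convert Sab.sub_one_sub_mem hcop hs using 1
      omega

theorem card_admissible_with_smaller_endpoint_general (a b i : ℕ) (ha : 0 < a) (hab : a < b)
    (hcop : Nat.Coprime a b) :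
    {j : ℕ | Admissible a b (i, j)}.ncard = a - 1 - a * i / b := by
  have hset : {j : ℕ | Admissible a b (i, j)} =
      ↑(((Sab a b).filter (· < b - i)).image (i + 1 + ·)) := by
    ext j
    simp [admissible_iff hab.le hcop, and_assoc]
  rw [hset, Set.ncard_coe_finset, card_image_of_injective _ (add_right_injective _),
    Sab.card_filter_lt_sub ha hab.le]

/-- The number of `a,b`-admissible diagonals with smaller endpoint `i` is
`a - 1 - ⌊a i / b⌋`. -/
theorem card_admissible_with_smaller_endpoint (a b i : ℕ) (ha : 0 < a) (hab : a < b)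
    (hcop : Nat.Coprime a b) (hi : i ≤ b - 1) :
    {j : ℕ | Admissible a b (i, j)}.ncard = a - 1 - a * i / b :=
  card_admissible_with_smaller_endpoint_general a b i ha hab hcop
end
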